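/- arXiv:1810.11436 — 8 statements merged into one kernel-verified Lean document; each statement's English description precedes it below -/
import Mathlib

section
/- For every integer s ≥ 2, c_s < (1/4) · exp( (s·log(2s) + (1/4)·log s) / (s(s−1)) ), where c_s := ∏_{j=1}^{s} ((j-1)^{2(j-1)} · j^j / (s+j-2)^{s+j-2})^{1/(s(s-1))}. -/
/-!
Taking logarithms, the claim is `D(s) < 0` for
`D(s) = s (s - 1) log (4 c_s) - s log (2 s) - (log s) / 4`, a combination of the sums
`∑_{k<n} k log k`. The increment `D(s + 1) - D(s)` is half a second difference of `t ↦ t log t`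
at `2s - 1`, minus `log (1 + 1/s) / 4`. The bounds `2 (t - 1) / (t + 1) ≤ log t ≤ (t - 1/t) / 2`
for `t ≥ 1` show that it is at most `g(s) - g(s + 1)` for
`g(s) = 1 / (2 (2s - 1)) + 1 / (15 s (s - 1))` and `s ≥ 5`. Hence `D(s) + g(s)` decreases from
`s = 5` on, and `D(5) + g(5) < 0` numerically, as are `D(2), D(3), D(4)`.
-/

/-- The constant `c_s` from the paper. -/
noncomputable def letendreC (s : ℕ) : ℝ :=
  ∏ j ∈ Finset.Icc 1 s,
    (((j - 1 : ℝ) ^ (2 * (j - 1)) * (j : ℝ) ^ j / ((s : ℝ) + j - 2) ^ (s + j - 2))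
      ^ ((1 : ℝ) / (s * (s - 1))))

open Real Finset

lemma two_mul_sub_one_div_add_one_le_log {t : ℝ} (ht : 1 ≤ t) :
    2 * (t - 1) / (t + 1) ≤ log t := by
  obtain ⟨a, ha, rfl⟩ : ∃ a : ℝ, 0 ≤ a ∧ t = 1 + a := ⟨t - 1, by linarith, by ring⟩
  have h := le_hasSum (hasSum_log_one_add ha) 0 fun k _ ↦ by positivity
  calc 2 * (1 + a - 1) / (1 + a + 1) = 2 * (a / (a + 2)) := by ring
    _ ≤ log (1 + a) := by simpa using h

lemma log_le_sub_inv_div_two {t : ℝ} (ht : 1 ≤ t) : log t ≤ (t - t⁻¹) / 2 := by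
  simpa [sinh_log (by linarith)] using self_le_sinh_iff.2 (log_nonneg ht)

lemma log_seven_gt_d4 : 1.9458 < log 7 := by
  have h := two_mul_sub_one_div_add_one_le_log (t := 7 ^ 2 / (2 ^ 4 * 3)) (by norm_num)
  rw [log_div (by norm_num) (by norm_num), log_mul (by norm_num) (by norm_num), log_pow, log_pow]
    at h
  norm_num at h
  linarith [log_two_gt_d9, log_three_gt_d9]

lemma mul_log_midpoint_gap_le {a : ℝ} (ha : 1 < a) :
    ((a + 1) * log (a + 1) + (a - 1) * log (a - 1)) / 2 - a * log a ≤
      a / (a ^ 2 - 1) - a / (2 * a ^ 2 - 1) := by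
  have ha0 : 0 < a - 1 := by linarith
  have ha2 : 0 < a ^ 2 - 1 := by nlinarith
  have hb : 0 < 2 * a ^ 2 - 1 := by nlinarith
  have hupper : log (a + 1) - log (a - 1) ≤ 2 * a / (a ^ 2 - 1) := by
    have h := log_le_sub_inv_div_two (t := (a + 1) / (a - 1)) (by rw [le_div_iff₀ ha0]; linarith)
    rw [log_div (by positivity) ha0.ne'] at h
    convert h using 1
    field_simp; ring
  have hlower : 2 / (2 * a ^ 2 - 1) ≤ 2 * log a - log (a + 1) - log (a - 1) := by
    have h := two_mul_sub_one_div_add_one_le_log (t := a ^ 2 / (a ^ 2 - 1))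
      (by rw [le_div_iff₀ ha2]; linarith)
    rw [log_div (by positivity) ha2.ne', log_pow, show a ^ 2 - 1 = (a + 1) * (a - 1) by ring,
      log_mul (by positivity) ha0.ne'] at h
    convert h using 1
    · field_simp; ring
    · push_cast; ring
  calc ((a + 1) * log (a + 1) + (a - 1) * log (a - 1)) / 2 - a * log a
      = (log (a + 1) - log (a - 1)) / 2 - a / 2 * (2 * log a - log (a + 1) - log (a - 1)) := by
        ring
    _ ≤ 2 * a / (a ^ 2 - 1) / 2 - a / 2 * (2 / (2 * a ^ 2 - 1)) := by gcongr
    _ = a / (a ^ 2 - 1) - a / (2 * a ^ 2 - 1) := by ring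

noncomputable def letendreIncrement (x : ℝ) : ℝ :=
  x * log (2 * x) + (x - 1) * log (2 * x - 2) - (2 * x - 1) * log (2 * x - 1) -
    (log (x + 1) - log x) / 4

/-- `1 / 15` is close to the least constant for which `sub_le_letendreCorrection_sub` holds at
`x = 5`, and small enough for `letendreDefect 5 + letendreCorrection 5 < 0`. -/
noncomputable def letendreCorrection (x : ℝ) : ℝ :=
  1 / (2 * (2 * x - 1)) + 1 / (15 * x * (x - 1))

lemma sub_le_letendreCorrection_sub {x : ℝ} (hx : 5 ≤ x) :
    (2 * x - 1) / ((2 * x - 1) ^ 2 - 1) - (2 * x - 1) / (2 * (2 * x - 1) ^ 2 - 1) -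
      1 / (2 * (2 * x + 1)) ≤ letendreCorrection x - letendreCorrection (x + 1) := by
  unfold letendreCorrection
  rw [show (2 * x - 1) ^ 2 - 1 = 4 * x * (x - 1) by ring, show 2 * (x + 1) - 1 = 2 * x + 1 by ring,
    show x + 1 - 1 = x by ring]
  have : 0 < x := by linarith
  have : 0 < x - 1 := by linarith
  have : 0 < 2 * x - 1 := by linarith
  have : 0 < 2 * (2 * x - 1) ^ 2 - 1 := by nlinarith
  have hnum : 0 ≤ 19 * (2 * x - 1) ^ 3 - 135 * (2 * x - 1) ^ 2 - 17 * (2 * x - 1) + 45 := by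
    nlinarith [sq_nonneg (2 * x - 1)]
  have hden : 0 < 240 * (2 * x - 1) * x * (x - 1) * (x + 1) * (2 * (2 * x - 1) ^ 2 - 1) := by
    positivity
  rw [← sub_nonneg]
  refine (div_nonneg hnum hden.le).trans_eq ?_
  field_simp
  ring

lemma letendreIncrement_le {x : ℝ} (hx : 5 ≤ x) :
    letendreIncrement x ≤ letendreCorrection x - letendreCorrection (x + 1) := by
  have hgap := mul_log_midpoint_gap_le (a := 2 * x - 1) (by linarith)
  have hlog : 1 / (2 * (2 * x + 1)) ≤ (log (x + 1) - log x) / 4 := by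
    have h := two_mul_sub_one_div_add_one_le_log (t := (x + 1) / x)
      (by rw [le_div_iff₀ (by linarith)]; linarith)
    rw [log_div (by linarith) (by linarith)] at h
    have : 2 * ((x + 1) / x - 1) / ((x + 1) / x + 1) = 4 * (1 / (2 * (2 * x + 1))) := by
      field_simp; ring
    linarith
  calc letendreIncrement x
      = ((2 * x - 1 + 1) * log (2 * x - 1 + 1) + (2 * x - 1 - 1) * log (2 * x - 1 - 1)) / 2 -
          (2 * x - 1) * log (2 * x - 1) - (log (x + 1) - log x) / 4 := by
        unfold letendreIncrement; ring_nf
    _ ≤ _ := by linarith [sub_le_letendreCorrection_sub hx]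

noncomputable def sumMulLog (n : ℕ) : ℝ := ∑ k ∈ range n, k * log k

lemma sumMulLog_succ (n : ℕ) : sumMulLog (n + 1) = sumMulLog n + n * log n :=
  sum_range_succ _ n

noncomputable def letendreLogSum (s : ℕ) : ℝ :=
  2 * sumMulLog s + sumMulLog (s + 1) + sumMulLog (s - 1) - sumMulLog (2 * s - 1)

lemma sum_range_mul_log_eq_letendreLogSum (m : ℕ) :
    ∑ i ∈ range (m + 1),
      (2 * (i * log i) + (1 + i : ℕ) * log (1 + i : ℕ) -
        (m + i : ℕ) * log (m + i : ℕ) : ℝ) =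
      letendreLogSum (m + 1) := by
  have hshift : ∑ i ∈ range (m + 1), ((1 + i : ℕ) : ℝ) * log (1 + i : ℕ) =
      sumMulLog (m + 2) := by
    rw [sumMulLog, sum_range_succ' _ (m + 1)]
    simp [add_comm]
  have htail : ∑ i ∈ range (m + 1), ((m + i : ℕ) : ℝ) * log (m + i : ℕ) =
      sumMulLog (m + (m + 1)) - sumMulLog m := by
    rw [sumMulLog, sumMulLog, sum_range_add _ m (m + 1), add_sub_cancel_left]
  rw [sum_sub_distrib, sum_add_distrib, ← mul_sum, hshift, htail, letendreLogSum,
    show 2 * (m + 1) - 1 = m + (m + 1) by omega, Nat.add_sub_cancel]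
  simp only [sumMulLog]
  ring

lemma natCast_pow_self_eq_exp (k : ℕ) : (k : ℝ) ^ k = exp (k * log k) := by
  rw [← log_pow, exp_log]
  rcases k with _ | k
  · simp
  · positivity

lemma letendreC_eq_exp {s : ℕ} (hs : 1 ≤ s) :
    letendreC s = exp (letendreLogSum s / (s * (s - 1))) := by
  obtain ⟨m, rfl⟩ : ∃ m, s = m + 1 := ⟨s - 1, by omega⟩
  have hfactor (i : ℕ) :
      (((1 + i : ℕ) : ℝ) - 1) ^ (2 * (1 + i - 1)) * ((1 + i : ℕ) : ℝ) ^ (1 + i) /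
        (((m + 1 : ℕ) : ℝ) + (1 + i : ℕ) - 2) ^ (m + 1 + (1 + i) - 2) =
      exp (2 * (i * log i) + (1 + i : ℕ) * log (1 + i : ℕ) -
        (m + i : ℕ) * log (m + i : ℕ)) := by
    have e1 : ((1 + i : ℕ) : ℝ) - 1 = i := by push_cast; ring
    have e2 : ((m + 1 : ℕ) : ℝ) + (1 + i : ℕ) - 2 = (m + i : ℕ) := by push_cast; ring
    rw [e1, e2, show 1 + i - 1 = i by omega, show m + 1 + (1 + i) - 2 = m + i by omega, pow_mul',
      natCast_pow_self_eq_exp, natCast_pow_self_eq_exp, natCast_pow_self_eq_exp, ← exp_nat_mul,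
      exp_sub, exp_add]
    push_cast; ring_nf
  rw [letendreC, ← Ico_add_one_right_eq_Icc, prod_Ico_eq_prod_range, Nat.add_sub_cancel]
  simp_rw [hfactor, ← exp_mul, ← exp_sum, ← sum_mul, sum_range_mul_log_eq_letendreLogSum]
  push_cast; ring_nf

noncomputable def letendreDefect (s : ℕ) : ℝ :=
  letendreLogSum s + 2 * s * (s - 1) * log 2 - s * log (2 * s) - log s / 4

lemma letendreDefect_succ {s : ℕ} (hs : 2 ≤ s) :
    letendreDefect (s + 1) = letendreDefect s + letendreIncrement s := by
  obtain ⟨k, rfl⟩ : ∃ k, s = k + 1 := ⟨s - 1, by omega⟩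
  have hk : (0 : ℝ) < k := by norm_cast; omega
  have hodd : sumMulLog (2 * (k + 1 + 1) - 1) = sumMulLog (2 * (k + 1) - 1) +
      (2 * k + 1) * log (2 * k + 1) + (2 * k + 2) * log (2 * k + 2) := by
    rw [show 2 * (k + 1 + 1) - 1 = 2 * k + 1 + 1 + 1 by omega, sumMulLog_succ, sumMulLog_succ,
      show 2 * (k + 1) - 1 = 2 * k + 1 by omega]
    push_cast; ring
  have hl1 : log (2 * (k + 1 + 1)) = log 2 + log (k + 1 + 1) := log_mul two_ne_zero (by positivity)
  have hl2 : log (2 * (k + 1)) = log 2 + log (k + 1) := log_mul two_ne_zero (by positivity)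
  have hl3 : log (2 * k) = log 2 + log k := log_mul two_ne_zero hk.ne'
  unfold letendreDefect letendreLogSum letendreIncrement
  rw [hodd, Nat.add_sub_cancel, Nat.add_sub_cancel, sumMulLog_succ (k + 1 + 1),
    sumMulLog_succ (k + 1), sumMulLog_succ k]
  push_cast
  rw [show 2 * ((k : ℝ) + 1) - 2 = 2 * k by ring,
    show 2 * ((k : ℝ) + 1) - 1 = 2 * k + 1 by ring, show (2 * k + 2 : ℝ) = 2 * (k + 1) by ring,
    hl1, hl2, hl3]
  ring

lemma letendreDefect_add_correction_le {n : ℕ} (hn : 5 ≤ n) :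
    letendreDefect n + letendreCorrection n ≤ letendreDefect 5 + letendreCorrection 5 := by
  induction n, hn using Nat.le_induction with
  | base => rfl
  | succ n hn ih =>
    have hstep := letendreIncrement_le (x := n) (by exact_mod_cast hn)
    rw [letendreDefect_succ (by omega)]
    push_cast
    linarith

lemma letendreDefect_neg {s : ℕ} (hs : 2 ≤ s) : letendreDefect s < 0 := by
  have h6 : log 6 = log 2 + log 3 := by rw [← log_mul] <;> norm_num
  have h8 : log 8 = 3 * log 2 := by rw [← log_rpow] <;> norm_num
  have h10 : log 10 = log 2 + log 5 := by rw [← log_mul] <;> norm_num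
  rcases lt_or_ge s 5 with hs5 | hs5
  · interval_cases s <;>
      norm_num [letendreDefect, letendreLogSum, sumMulLog, sum_range_succ, log_four_eq, h6, h8] <;>
      linarith [log_two_gt_d9, log_two_lt_d9, log_three_gt_d9, log_five_gt_d9]
  · have hfive : letendreDefect 5 + letendreCorrection 5 < 0 := by
      norm_num [letendreDefect, letendreLogSum, letendreCorrection, sumMulLog, sum_range_succ,
        log_four_eq, h6, h8, h10]
      linarith [log_two_lt_d9, log_three_lt_d9, log_five_gt_d9, log_seven_gt_d4]
    have hs' : (5 : ℝ) ≤ s := by exact_mod_cast hs5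
    have hcorr : 0 < letendreCorrection s := by
      unfold letendreCorrection
      have : 0 < (s : ℝ) - 1 := by linarith
      have : 0 < 2 * (s : ℝ) - 1 := by linarith
      positivity
    linarith [letendreDefect_add_correction_le hs5]

theorem letendreC_lt (s : ℕ) (hs : 2 ≤ s) :
    letendreC s <
      (1 / 4) * Real.exp ((s * Real.log (2 * s) + (1 / 4) * Real.log s) / (s * (s - 1))) := by
  have hs' : (2 : ℝ) ≤ s := by exact_mod_cast hs
  have hM : (0 : ℝ) < s * (s - 1) := by nlinarith
  have hquarter (y : ℝ) : 1 / 4 * exp y = exp (-(2 * log 2) + y) := by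
    rw [exp_add, ← log_four_eq, exp_neg, exp_log (by norm_num)]; norm_num
  have hdefect : letendreLogSum s / (s * (s - 1)) -
      (-(2 * log 2) + (s * log (2 * s) + 1 / 4 * log s) / (s * (s - 1))) =
      letendreDefect s / (s * (s - 1)) := by
    have : (s : ℝ) - 1 ≠ 0 := by linarith
    unfold letendreDefect; field_simp; ring
  rw [letendreC_eq_exp (by omega), hquarter, exp_lt_exp]
  linarith [div_neg_of_neg_of_pos (letendreDefect_neg hs) hM]
end

section
/- Let P(x) = a_n x^n + ⋯ + a_1 x + a_0 ∈ ℤ[x] have degree n ≥ 1 and let q ≥ 2 satisfy gcd(a_n, …, a_0, q) = 1. Let x_1 < x_2 < ⋯ < x_s be integers with P(x_i) ≡ 0 (mod q) for all i, and set Δ := ∏_{1 ≤ i < j ≤ s} (x_j − x_i). If s ≥ n + 1, then for every prime p, (s²/(2n) − s/2) · v_p(q) ≤ v_p(Δ), where v_p denotes the p-adic valuation. -/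
/-!
Fix a prime `p ∣ q` and put `E = v_p(q)`. The content condition makes `P` nonzero modulo `p`, and
every `x_i` is a root of `P` modulo `p ^ E`. For any `f ∈ ℤ[X]` that is nonzero modulo `p` with
`deg f̄ ≤ d`, and any `t` distinct roots of `f` modulo `p ^ E`, we show
`E (t² / d - t) ≤ ∑_{i ≠ j} v_p(x_i - x_j)` (which is `2 v_p(Δ)`) by strong induction on `E`.

Split the roots into residue classes modulo `p`. For the class of `r` write
`f(pY + r) = p ^ μ Q(Y)`, where `μ` is the `p`-adic valuation of the content of `f(pY + r)`;
then `1 ≤ μ ≤ mult_r(f̄)`, `Q̄ ≠ 0` and `deg Q̄ ≤ μ`. The rescaled roots are roots of `Q` modulo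
`p ^ (E - μ)`, and rescaling removes exactly one factor of `p` from each difference in the class.
So the induction hypothesis for `Q` with `d = μ` bounds each class. The multiplicities add up to at
most `d`, so the Cauchy–Schwarz bound `(∑ t_r)² / d ≤ ∑ t_r² / μ_r` combines the classes.
-/

open Polynomial Finset

theorem padicValInt_neg (p : ℕ) (a : ℤ) : padicValInt p (-a) = padicValInt p a := by
  rw [padicValInt, padicValInt, Int.natAbs_neg]

theorem padicValInt_prod {p : ℕ} [Fact p.Prime] {ι : Type*} {s : Finset ι} {f : ι → ℤ}
    (hf : ∀ i ∈ s, f i ≠ 0) : padicValInt p (∏ i ∈ s, f i) = ∑ i ∈ s, padicValInt p (f i) := by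
  induction s using Finset.cons_induction with
  | empty => simp
  | cons a s ha ih =>
    rw [prod_cons, sum_cons, padicValInt.mul (hf a (mem_cons_self a s))
      (prod_ne_zero_iff.mpr fun i hi => hf i (mem_cons_of_mem hi)),
      ih fun i hi => hf i (mem_cons_of_mem hi)]

theorem Finset.sum_offDiag_univ_eq_sum_lt {ι M : Type*} [Fintype ι] [LinearOrder ι]
    [AddCommMonoid M] (F : ι → ι → M) :
    ∑ ij ∈ univ.offDiag, F ij.1 ij.2 = ∑ ij ∈ univ.filter (fun ij : ι × ι => ij.1 < ij.2),
      (F ij.1 ij.2 + F ij.2 ij.1) := by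
  rw [sum_add_distrib, ← sum_filter_add_sum_filter_not _ (fun ij : ι × ι => ij.1 < ij.2)]
  congr 1
  · exact sum_congr (by ext; simpa using ne_of_lt) fun _ _ => rfl
  · refine sum_equiv (Equiv.prodComm ι ι) (fun ij => ?_) fun _ _ => rfl
    simp only [mem_filter, mem_offDiag, mem_univ, true_and, Equiv.prodComm_apply, Prod.fst_swap,
      Prod.snd_swap, not_lt]
    grind

namespace Polynomial

theorem map_intCastRingHom_zmod_eq_zero_iff {p : ℕ} {f : ℤ[X]} :
    f.map (Int.castRingHom (ZMod p)) = 0 ↔ (p : ℤ) ∣ f.content := by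
  rw [dvd_content_iff_C_dvd, C_dvd_iff_dvd_coeff, Polynomial.ext_iff]
  simp only [coeff_map, coeff_zero, eq_intCast, ZMod.intCast_zmod_eq_zero_iff_dvd]

theorem taylor_coeff_rootMultiplicity_ne_zero {R : Type*} [CommRing R] {f : R[X]} (hf : f ≠ 0)
    (t : R) : (taylor t f).coeff (f.rootMultiplicity t) ≠ 0 := by
  rw [rootMultiplicity_eq_natTrailingDegree, ← taylor_apply]
  exact trailingCoeff_nonzero_iff_nonzero.mpr (mt (taylor_eq_zero t f).mp hf)

theorem sum_rootMultiplicity_le_natDegree {R : Type*} [CommRing R] [IsDomain R]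
    (f : R[X]) (S : Finset R) :
    ∑ c ∈ S, f.rootMultiplicity c ≤ f.natDegree := by
  classical
  calc ∑ c ∈ S, f.rootMultiplicity c = ∑ c ∈ S, f.roots.count c := by simp only [count_roots]
    _ ≤ ∑ c ∈ S ∪ f.roots.toFinset, f.roots.count c := sum_le_sum_of_subset subset_union_left
    _ = Multiset.card f.roots := Multiset.sum_count_eq_card fun c hc => by simp [hc]
    _ ≤ f.natDegree := card_roots' f

end Polynomial

theorem exists_eq_C_pow_padicValInt_content_mul {p : ℕ} [Fact p.Prime] {g : ℤ[X]} (hg : g ≠ 0) :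
    ∃ Q : ℤ[X], g = C ((p : ℤ) ^ padicValInt p g.content) * Q ∧
      Q.map (Int.castRingHom (ZMod p)) ≠ 0 := by
  set v := padicValInt p g.content
  obtain ⟨Q, hQ⟩ := dvd_content_iff_C_dvd.mp (padicValInt_dvd g.content)
  refine ⟨Q, hQ, fun hQ0 => ?_⟩
  have hpQ : C (p : ℤ) ∣ Q := dvd_content_iff_C_dvd.mp (map_intCastRingHom_zmod_eq_zero_iff.mp hQ0)
  have hdvd : (p : ℤ) ^ (v + 1) ∣ g.content := by
    rw [dvd_content_iff_C_dvd, pow_succ, C_mul, hQ]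
    exact mul_dvd_mul_left _ hpQ
  rcases (padicValInt_dvd_iff _ _).mp hdvd with h | h
  · exact hg (content_eq_zero_iff.mp h)
  · omega

theorem exists_eval_mul_add_eq_pow_mul {p : ℕ} [Fact p.Prime] {f : ℤ[X]}
    (hf : f.map (Int.castRingHom (ZMod p)) ≠ 0) {r : ℤ} (hr : (p : ℤ) ∣ f.eval r) :
    ∃ μ : ℕ, ∃ Q : ℤ[X], 1 ≤ μ ∧
      μ ≤ (f.map (Int.castRingHom (ZMod p))).rootMultiplicity (r : ZMod p) ∧
      Q.map (Int.castRingHom (ZMod p)) ≠ 0 ∧ (Q.map (Int.castRingHom (ZMod p))).natDegree ≤ μ ∧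
      ∀ y, f.eval (p * y + r) = p ^ μ * Q.eval y := by
  have hp0 : (p : ℤ) ≠ 0 := by exact_mod_cast (Fact.out : p.Prime).ne_zero
  set g := (taylor r f).comp (C (p : ℤ) * X)
  have hg_coeff (m : ℕ) : g.coeff m = (taylor r f).coeff m * p ^ m := comp_C_mul_X_coeff
  have hg0 : g ≠ 0 := by
    rw [Ne, comp_C_mul_X_eq_zero_iff (mem_nonZeroDivisors_of_ne_zero hp0), taylor_eq_zero]
    rintro rfl
    exact hf (Polynomial.map_zero _)
  obtain ⟨Q, hgQ, hQ⟩ := exists_eq_C_pow_padicValInt_content_mul (p := p) hg0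
  set μ := padicValInt p g.content
  set a := (f.map (Int.castRingHom (ZMod p))).rootMultiplicity (r : ZMod p)
  have ha : ¬ (p : ℤ) ∣ (taylor r f).coeff a := by
    have := taylor_coeff_rootMultiplicity_ne_zero hf (r : ZMod p)
    rwa [← eq_intCast (Int.castRingHom (ZMod p)), ← map_taylor, coeff_map, eq_intCast, Ne,
      ZMod.intCast_zmod_eq_zero_iff_dvd] at this
  refine ⟨μ, Q, ?_, ?_, hQ, ?_, ?_⟩
  · have hpg : (p : ℤ) ^ 1 ∣ g.content := by
      rw [pow_one, dvd_content_iff_C_dvd, C_dvd_iff_dvd_coeff]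
      intro m
      rw [hg_coeff]
      cases m with
      | zero => simpa [taylor_coeff_zero] using hr
      | succ m => exact dvd_mul_of_dvd_right (dvd_pow_self _ m.succ_ne_zero) _
    exact ((padicValInt_dvd_iff 1 _).mp hpg).resolve_left (mt content_eq_zero_iff.mp hg0)
  · by_contra! h
    have hdvd : (p : ℤ) ^ a * p ∣ (p : ℤ) ^ a * (taylor r f).coeff a := by
      rw [← pow_succ, mul_comm, ← hg_coeff]
      exact (pow_dvd_pow _ h).trans ((padicValInt_dvd _).trans (content_dvd_coeff a))
    exact ha ((mul_dvd_mul_iff_left (pow_ne_zero a hp0)).mp hdvd)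
  · rw [natDegree_le_iff_coeff_eq_zero]
    intro m hm
    rw [coeff_map, eq_intCast, ZMod.intCast_zmod_eq_zero_iff_dvd]
    have hQm : p ^ μ * Q.coeff m = p ^ μ * ((taylor r f).coeff m * p ^ (m - μ)) := by
      rw [← coeff_C_mul, ← hgQ, hg_coeff, mul_left_comm, ← pow_add, Nat.add_sub_cancel' hm.le]
    rw [mul_left_cancel₀ (pow_ne_zero _ hp0) hQm]
    exact dvd_mul_of_dvd_right (dvd_pow_self _ (by omega)) _
  · intro y
    calc f.eval (p * y + r) = g.eval y := by simp [g, eval_comp, taylor_eval]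
      _ = p ^ μ * Q.eval y := by rw [hgQ, eval_mul, eval_C]

section DiffValuation

variable {ι : Type*}

theorem exists_injOn_eq_mul_add {p : ℕ} {s : Finset ι} {x : ι → ℤ} (hx : Set.InjOn x s) {r : ℤ}
    (hr : ∀ i ∈ s, (x i : ZMod p) = r) :
    ∃ y : ι → ℤ, Set.InjOn y s ∧ ∀ i ∈ s, x i = p * y i + r := by
  have hxy : ∀ i ∈ s, x i = p * ((x i - r) / p) + r := fun i hi => by
    rw [Int.mul_ediv_cancel' ((ZMod.intCast_eq_intCast_iff_dvd_sub _ _ _).mp (hr i hi).symm),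
      sub_add_cancel]
  refine ⟨fun i => (x i - r) / p, fun i hi j hj h => hx hi hj ?_, hxy⟩
  rw [hxy i hi, hxy j hj]
  exact congrArg (p * · + r) h

def diffValuation (p : ℕ) (s : Finset ι) (x : ι → ℤ) : ℕ :=
  ∑ ij ∈ s.offDiag, padicValInt p (x ij.1 - x ij.2)

theorem diffValuation_eq_add_of_eq_mul_add {p : ℕ} [Fact p.Prime] {s : Finset ι} {x y : ι → ℤ}
    (hy : Set.InjOn y s) {r : ℤ} (hxy : ∀ i ∈ s, x i = p * y i + r) :
    diffValuation p s x = diffValuation p s y + (#s * #s - #s) := by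
  rw [diffValuation, diffValuation, ← offDiag_card, card_eq_sum_ones, ← sum_add_distrib]
  refine sum_congr rfl fun ij hij => ?_
  obtain ⟨hi, hj, hne⟩ := mem_offDiag.mp hij
  rw [hxy _ hi, hxy _ hj, show p * y ij.1 + r - (p * y ij.2 + r) = (y ij.1 - y ij.2) * p by ring,
    padicValInt_mul_eq_succ _ (sub_ne_zero.mpr fun h => hne (hy hi hj h))]

theorem sum_diffValuation_filter_le {κ : Type*} [DecidableEq κ] (p : ℕ) (s : Finset ι)
    (x : ι → ℤ) (g : ι → κ) (t : Finset κ) :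
    ∑ c ∈ t, diffValuation p (s.filter (g · = c)) x ≤ diffValuation p s x := by
  calc ∑ c ∈ t, diffValuation p (s.filter (g · = c)) x
      ≤ ∑ c ∈ t, ∑ ij ∈ s.offDiag with g ij.1 = c, padicValInt p (x ij.1 - x ij.2) := by
        gcongr with c
        refine sum_le_sum_of_subset fun ij hij => ?_
        simp only [mem_offDiag, mem_filter] at hij ⊢
        exact ⟨⟨hij.1.1, hij.2.1.1, hij.2.2⟩, hij.1.2⟩
    _ = ∑ ij ∈ s.offDiag with g ij.1 ∈ t, padicValInt p (x ij.1 - x ij.2) :=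
        sum_fiberwise_eq_sum_filter _ _ _ _
    _ ≤ diffValuation p s x := sum_le_sum_of_subset (filter_subset _ _)

end DiffValuation

-- One residue class: `V` bounds the rescaled class, and rescaling adds `t² - t`.
theorem mul_sq_div_sub_le_add {E μ t : ℕ} {V : ℝ} (hμ : 1 ≤ μ) (hV : 0 ≤ V)
    (h : μ < E → ((E : ℝ) - μ) * ((t : ℝ) ^ 2 / μ - t) ≤ V) :
    (E : ℝ) * ((t : ℝ) ^ 2 / μ - t) ≤ V + ((t : ℝ) ^ 2 - t) := by
  have hμ' : (1 : ℝ) ≤ μ := by exact_mod_cast hμ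
  have ht : (0 : ℝ) ≤ t := t.cast_nonneg
  have htt : (t : ℝ) ≤ (t : ℝ) ^ 2 := by
    rcases t.eq_zero_or_pos with rfl | ht1
    · simp
    · nlinarith [(by exact_mod_cast ht1 : (1 : ℝ) ≤ t)]
  have hsplit : (μ : ℝ) * ((t : ℝ) ^ 2 / μ - t) = (t : ℝ) ^ 2 - μ * t := by
    field_simp
  rcases lt_or_ge μ E with hμE | hEμ
  · nlinarith [h hμE]
  · have hEμ' : (E : ℝ) ≤ μ := by exact_mod_cast hEμ
    rcases le_total 0 ((t : ℝ) ^ 2 / μ - t) with hpos | hneg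
    · nlinarith [mul_le_mul_of_nonneg_right hEμ' hpos]
    · nlinarith [mul_nonpos_of_nonneg_of_nonpos (E.cast_nonneg : (0 : ℝ) ≤ E) hneg]

theorem mul_sq_sum_div_sub_le_sum {κ : Type*} (R : Finset κ) (t μ V : κ → ℝ) {E d : ℝ}
    (hE : 0 ≤ E) (hμ : ∀ c ∈ R, 0 < μ c) (hd : ∑ c ∈ R, μ c ≤ d)
    (h : ∀ c ∈ R, E * (t c ^ 2 / μ c - t c) ≤ V c) :
    E * ((∑ c ∈ R, t c) ^ 2 / d - ∑ c ∈ R, t c) ≤ ∑ c ∈ R, V c := by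
  rcases R.eq_empty_or_nonempty with rfl | hR
  · simp
  have hCS : (∑ c ∈ R, t c) ^ 2 / d ≤ ∑ c ∈ R, t c ^ 2 / μ c :=
    (div_le_div_of_nonneg_left (sq_nonneg _) (sum_pos hμ hR) hd).trans
      (sq_sum_div_le_sum_sq_div R t hμ)
  calc E * ((∑ c ∈ R, t c) ^ 2 / d - ∑ c ∈ R, t c)
      ≤ E * (∑ c ∈ R, t c ^ 2 / μ c - ∑ c ∈ R, t c) := by gcongr
    _ = ∑ c ∈ R, E * (t c ^ 2 / μ c - t c) := by rw [← sum_sub_distrib, mul_sum]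
    _ ≤ ∑ c ∈ R, V c := sum_le_sum h

theorem le_diffValuation {p : ℕ} [Fact p.Prime] {ι : Type*} (E : ℕ) {f : ℤ[X]}
    (hf : f.map (Int.castRingHom (ZMod p)) ≠ 0) {d : ℕ}
    (hd : (f.map (Int.castRingHom (ZMod p))).natDegree ≤ d) {s : Finset ι} {x : ι → ℤ}
    (hx : Set.InjOn x s) (hroot : ∀ i ∈ s, (p : ℤ) ^ E ∣ f.eval (x i)) :
    (E : ℝ) * ((#s : ℝ) ^ 2 / d - #s) ≤ diffValuation p s x := by
  induction E using Nat.strong_induction_on generalizing f d s x with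
  | _ E IH =>
  rcases E.eq_zero_or_pos with rfl | hE
  · simp
  have hp0 : (p : ℤ) ≠ 0 := by exact_mod_cast (Fact.out : p.Prime).ne_zero
  set R := s.image fun i => (x i : ZMod p)
  set cls : ZMod p → Finset ι := fun c => s.filter fun i => (x i : ZMod p) = c
  have hclass : ∀ c ∈ R, ∃ μ : ℕ, 1 ≤ μ ∧
      μ ≤ (f.map (Int.castRingHom (ZMod p))).rootMultiplicity c ∧
      (E : ℝ) * ((#(cls c) : ℝ) ^ 2 / μ - #(cls c)) ≤ diffValuation p (cls c) x := by
    intro c hc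
    obtain ⟨i₀, hi₀, rfl⟩ := mem_image.mp hc
    obtain ⟨μ, Q, hμ, hμa, hQ, hQd, hfQ⟩ := exists_eval_mul_add_eq_pow_mul hf
      ((dvd_pow_self (p : ℤ) hE.ne').trans (hroot i₀ hi₀))
    obtain ⟨y, hy, hxy⟩ := exists_injOn_eq_mul_add (hx.mono (filter_subset _ s))
      fun i hi => (mem_filter.mp hi).2
    refine ⟨μ, hμ, hμa, ?_⟩
    rw [diffValuation_eq_add_of_eq_mul_add hy hxy, Nat.cast_add, Nat.cast_sub (Nat.le_mul_self _),
      Nat.cast_mul, ← sq]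
    refine mul_sq_div_sub_le_add hμ (Nat.cast_nonneg _) fun hμE => ?_
    have hQroot : ∀ i ∈ cls (x i₀), (p : ℤ) ^ (E - μ) ∣ Q.eval (y i) := fun i hi => by
      refine (mul_dvd_mul_iff_left (pow_ne_zero μ hp0)).mp ?_
      rw [← pow_add, Nat.add_sub_cancel' hμE.le, ← hfQ, ← hxy i hi]
      exact hroot i (mem_filter.mp hi).1
    simpa [Nat.cast_sub hμE.le] using IH (E - μ) (by omega) hQ hQd hy hQroot
  choose! μ hμ using hclass
  have hμd : ∑ c ∈ R, (μ c : ℝ) ≤ d := by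
    exact_mod_cast (sum_le_sum fun c hc => (hμ c hc).2.1).trans
      ((sum_rootMultiplicity_le_natDegree _ R).trans hd)
  calc (E : ℝ) * ((#s : ℝ) ^ 2 / d - #s)
      = (E : ℝ) * ((∑ c ∈ R, (#(cls c) : ℝ)) ^ 2 / d - ∑ c ∈ R, (#(cls c) : ℝ)) := by
        rw [← Nat.cast_sum, ← card_eq_sum_card_image]
    _ ≤ ∑ c ∈ R, (diffValuation p (cls c) x : ℝ) :=
        mul_sq_sum_div_sub_le_sum R _ _ _ E.cast_nonneg
          (fun c hc => by exact_mod_cast (hμ c hc).1) hμd (fun c hc => (hμ c hc).2.2)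
    _ ≤ diffValuation p s x := by exact_mod_cast sum_diffValuation_filter_le p s x _ R

theorem valuation_divisibility_of_roots_general
    (P : Polynomial ℤ) (n : ℕ) (hdeg : P.natDegree = n)
    (q : ℕ) (hcont : Int.gcd P.content q = 1)
    (s : ℕ) (x : Fin s → ℤ) (hmono : StrictMono x)
    (hroot : ∀ i, (q : ℤ) ∣ P.eval (x i)) (p : ℕ) (hp : p.Prime) :
    ((s : ℝ) ^ 2 / (2 * n) - s / 2) * (q.factorization p) ≤
      padicValInt p (∏ pr ∈ Finset.univ.filter (fun pr : Fin s × Fin s => pr.1 < pr.2),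
        (x pr.2 - x pr.1)) := by
  have : Fact p.Prime := ⟨hp⟩
  rw [padicValInt_prod fun ij hij => sub_ne_zero.mpr (hmono (mem_filter.mp hij).2).ne']
  by_cases hpq : p ∣ q
  swap
  · rw [Nat.factorization_eq_zero_of_not_dvd hpq, Nat.cast_zero, mul_zero]
    positivity
  have hP : P.map (Int.castRingHom (ZMod p)) ≠ 0 := fun h => by
    have hp1 := Int.dvd_gcd (map_intCastRingHom_zmod_eq_zero_iff.mp h)
      (Int.natCast_dvd_natCast.mpr hpq)
    rw [hcont, Nat.dvd_one] at hp1
    exact hp.one_lt.ne' hp1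
  have hroot' : ∀ i ∈ (univ : Finset (Fin s)), (p : ℤ) ^ q.factorization p ∣ P.eval (x i) :=
    fun i _ => (Int.natCast_dvd_natCast.mpr (Nat.ordProj_dvd q p)).trans (hroot i)
  have hsum : diffValuation p univ x = 2 * ∑ ij ∈ univ.filter (fun ij : Fin s × Fin s =>
      ij.1 < ij.2), padicValInt p (x ij.2 - x ij.1) := by
    rw [diffValuation, sum_offDiag_univ_eq_sum_lt (fun i j => padicValInt p (x i - x j)), mul_sum]
    exact sum_congr rfl fun ij _ => by rw [← neg_sub (x ij.2), padicValInt_neg, two_mul]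
  have key := le_diffValuation _ hP (hdeg ▸ natDegree_map_le) hmono.injective.injOn hroot'
  rw [hsum, card_univ, Fintype.card_fin] at key
  push_cast at key ⊢
  rw [mul_comm 2 (n : ℝ), ← div_div]
  linarith

theorem valuation_divisibility_of_roots
    (P : Polynomial ℤ) (n : ℕ) (hn : 1 ≤ n) (hdeg : P.natDegree = n)
    (q : ℕ) (hq : 2 ≤ q) (hcont : Int.gcd P.content q = 1)
    (s : ℕ) (hs : n + 1 ≤ s) (x : Fin s → ℤ) (hmono : StrictMono x)
    (hroot : ∀ i, (q : ℤ) ∣ P.eval (x i)) (p : ℕ) (hp : p.Prime) :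
    ((s : ℝ) ^ 2 / (2 * n) - s / 2) * (q.factorization p) ≤
      padicValInt p (∏ pr ∈ Finset.univ.filter (fun pr : Fin s × Fin s => pr.1 < pr.2),
        (x pr.2 - x pr.1)) :=
  valuation_divisibility_of_roots_general P n hdeg q hcont s x hmono hroot p hp
end

section
/- Let Ω ⊂ ℝ^m be a closed parallelepiped of nonzero m-dimensional volume, and define t(Ω) as the supremum over all (m+1)-tuples v_1, …, v_{m+1} ∈ Ω of the absolute value of the determinant of the (m+1)×(m+1) matrix whose first row is all 1's and whose remaining rows have columns v_1, …, v_{m+1}. Then t(Ω) ≤ ((m+2)^{(m+1)/2} / 2^m) · Vol(Ω). -/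
/-!
An affine map `x ↦ a + x ᵥ* B` multiplies `D` by `|det B|`, because in homogeneous coordinates
it acts on the matrix of points by left multiplication with a matrix of determinant `det B`.
A parallelepiped is the image of the unit cube under such a map with `|det B|` its volume, so it
suffices to bound `D` on the unit cube. There the affine map `x ↦ 2x - 1`, which multiplies `D` by
`2^m`, moves all entries of the matrix into `[-1, 1]`, and Hadamard's inequality bounds its
determinant by `(m + 1)^((m + 1)/2)`.
-/

open MeasureTheory

/-- `D(v₁,…,v_{m+1})`: absolute value of the determinant of the matrix with a
first row of 1's and the points as the remaining rows' columns. -/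
noncomputable def letendreD (m : ℕ) (v : Fin (m + 1) → (Fin m → ℝ)) : ℝ :=
  |(Matrix.of (Fin.cons (fun _ => (1 : ℝ)) (fun i j => v j i))).det|

/-- `t(Ω)`: supremum of `D` over tuples of points of `Ω`. -/
noncomputable def letendreT (m : ℕ) (Ω : Set (Fin m → ℝ)) : ℝ :=
  sSup {y : ℝ | ∃ v : Fin (m + 1) → (Fin m → ℝ), (∀ i, v i ∈ Ω) ∧ y = letendreD m v}

open Finset Matrix

namespace Matrix

theorem abs_det_le_prod_norm_row {n : ℕ} (A : Matrix (Fin n) (Fin n) ℝ) :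
    |A.det| ≤ ∏ i, ‖WithLp.toLp 2 (A i)‖ := by
  have : Fact (Module.finrank ℝ (EuclideanSpace ℝ (Fin n)) = n) :=
    ⟨finrank_euclideanSpace_fin⟩
  let b := EuclideanSpace.basisFun (Fin n) ℝ
  have hdet : b.toBasis.det (fun i => WithLp.toLp 2 (A i)) = A.det := by
    rw [Module.Basis.det_apply, ← det_transpose]
    rfl
  rw [← hdet, ← b.toBasis.orientation.volumeForm_robust' b]
  exact b.toBasis.orientation.abs_volumeForm_apply_le _

theorem abs_det_le_of_abs_le_one {n : ℕ} (A : Matrix (Fin n) (Fin n) ℝ)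
    (hA : ∀ i j, |A i j| ≤ 1) : |A.det| ≤ √n ^ n := by
  have hrow : ∀ i, ‖WithLp.toLp 2 (A i)‖ ≤ √n := fun i => by
    rw [EuclideanSpace.norm_eq]
    gcongr
    calc ∑ j, ‖A i j‖ ^ 2 ≤ ∑ _j : Fin n, (1 : ℝ) :=
          sum_le_sum fun j _ => by simpa using (sq_le_one_iff_abs_le_one _).2 (hA i j)
      _ = n := by simp
  calc |A.det| ≤ ∏ i, ‖WithLp.toLp 2 (A i)‖ := abs_det_le_prod_norm_row A
    _ ≤ ∏ _i : Fin n, √n := prod_le_prod (fun _ _ => norm_nonneg _) fun i _ => hrow i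
    _ = √n ^ n := by simp

end Matrix

/-- The homogeneous-coordinate matrix of `x ↦ a + x ᵥ* B`: it sends the column `(1, x)` to
`(1, a + x ᵥ* B)`. -/
def affineMatrix {m : ℕ} (a : Fin m → ℝ) (B : Matrix (Fin m) (Fin m) ℝ) :
    Matrix (Fin (m + 1)) (Fin (m + 1)) ℝ :=
  of (Fin.cons (Pi.single 0 1) fun i => Fin.cons (a i) fun k => B k i)

theorem det_affineMatrix {m : ℕ} (a : Fin m → ℝ) (B : Matrix (Fin m) (Fin m) ℝ) :
    (affineMatrix a B).det = B.det := by
  have hsub : (affineMatrix a B).submatrix Fin.succ Fin.succ = Bᵀ := by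
    ext i k
    rfl
  rw [det_succ_row_zero, Fin.sum_univ_succ, Fin.succAbove_zero, hsub, det_transpose]
  simp [affineMatrix]

theorem letendreD_add_vecMul {m : ℕ} (a : Fin m → ℝ) (B : Matrix (Fin m) (Fin m) ℝ)
    (v : Fin (m + 1) → Fin m → ℝ) :
    letendreD m (fun j => a + v j ᵥ* B) = |B.det| * letendreD m v := by
  have hmul : of (Fin.cons (fun _ => (1 : ℝ)) fun i j => (a + v j ᵥ* B) i) =
      affineMatrix a B * of (Fin.cons (fun _ => (1 : ℝ)) fun i j => v j i) := by
    ext i j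
    rw [mul_apply, Fin.sum_univ_succ]
    refine Fin.cases ?_ (fun i => ?_) i
    · simp [affineMatrix, Fin.succ_ne_zero]
    · simp [affineMatrix, vecMul, dotProduct, mul_comm]
  rw [letendreD, letendreD, hmul, det_mul, abs_mul, det_affineMatrix]

theorem letendreD_le_of_mem_Icc {m : ℕ} (t : Fin (m + 1) → Fin m → ℝ)
    (ht : ∀ j, t j ∈ Set.Icc 0 1) :
    letendreD m t ≤ √(m + 1 : ℕ) ^ (m + 1) / 2 ^ m := by
  set u : Fin (m + 1) → Fin m → ℝ := fun j => -1 + t j ᵥ* diagonal fun _ => 2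
  have hu : letendreD m u = 2 ^ m * letendreD m t := by
    rw [letendreD_add_vecMul, det_diagonal]
    simp
  have hbound : letendreD m u ≤ √(m + 1 : ℕ) ^ (m + 1) := by
    refine abs_det_le_of_abs_le_one _ fun i j => ?_
    refine Fin.cases ?_ (fun i => ?_) i
    · simp
    · have h1 : t j i ≤ 1 := (ht j).2 i
      simpa [u, abs_le] using ⟨(ht j).1 i, by linarith⟩
  rw [le_div_iff₀ (by positivity), mul_comm, ← hu]
  exact hbound

theorem volume_add_parallelepiped {ι : Type*} [Fintype ι] [DecidableEq ι] (a : ι → ℝ)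
    (w : ι → ι → ℝ) :
    volume ((fun x => a + x) '' parallelepiped w) = ENNReal.ofReal |(of w).det| := by
  rw [Set.image_add_left, measure_preimage_add, ← addHaarMeasure_eq_volume_pi,
    ← Module.Basis.parallelepiped_basisFun, ← Module.Basis.addHaar_def,
    Measure.addHaar_parallelepiped, Pi.basisFun_det_apply]

theorem sqrt_natCast_succ_pow_le (m : ℕ) :
    √(m + 1 : ℕ) ^ (m + 1) ≤ ((m : ℝ) + 2) ^ (((m : ℝ) + 1) / 2) := by
  rw [Real.sqrt_eq_rpow, ← Real.rpow_mul_natCast (by positivity)]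
  push_cast
  calc ((m : ℝ) + 1) ^ (1 / 2 * ((m : ℝ) + 1)) = ((m : ℝ) + 1) ^ (((m : ℝ) + 1) / 2) := by
        ring_nf
    _ ≤ ((m : ℝ) + 2) ^ (((m : ℝ) + 1) / 2) := by gcongr; linarith

theorem t_parallelepiped_le_general (m : ℕ)
    (a : Fin m → ℝ) (w : Fin m → (Fin m → ℝ))
    (Ω : Set (Fin m → ℝ)) (hΩ : Ω = (fun x => a + x) '' parallelepiped w) :
    letendreT m Ω ≤ ((m : ℝ) + 2) ^ (((m : ℝ) + 1) / 2) / 2 ^ m * (volume Ω).toReal := by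
  subst hΩ
  rw [volume_add_parallelepiped, ENNReal.toReal_ofReal (abs_nonneg _)]
  refine Real.sSup_le ?_ (by positivity)
  rintro _ ⟨v, hv, rfl⟩
  have hcube : ∀ j, ∃ t ∈ Set.Icc (0 : Fin m → ℝ) 1, v j = a + t ᵥ* of w := fun j => by
    obtain ⟨x, hx, hxv⟩ := hv j
    obtain ⟨t, ht, rfl⟩ := (mem_parallelepiped_iff w x).1 hx
    exact ⟨t, ht, by rw [← hxv, vecMul_eq_sum]; rfl⟩
  choose t ht hvt using hcube
  obtain rfl : v = fun j => a + t j ᵥ* of w := funext hvt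
  rw [letendreD_add_vecMul, mul_comm _ |_|]
  gcongr
  exact (letendreD_le_of_mem_Icc t ht).trans (by gcongr; exact sqrt_natCast_succ_pow_le m)

theorem t_parallelepiped_le (m : ℕ) (hm : 1 ≤ m)
    (a : Fin m → ℝ) (w : Fin m → (Fin m → ℝ))
    (Ω : Set (Fin m → ℝ)) (hΩ : Ω = (fun x => a + x) '' parallelepiped w)
    (hvol : volume Ω ≠ 0) :
    letendreT m Ω ≤ ((m : ℝ) + 2) ^ (((m : ℝ) + 1) / 2) / 2 ^ m * (volume Ω).toReal :=
  t_parallelepiped_le_general m a w Ω hΩ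
end

section
/- Define D(v_1,…,v_{m+1}) := |det [[1,…,1],[v_1,…,v_{m+1}]]| for points v_i ∈ ℝ^m, and t(Ω) := sup over v_1,…,v_{m+1} ∈ Ω of D(v_1,…,v_{m+1}). For Ω the unit cube [0,1]^m: t([0,1]^1) = 1, t([0,1]^2) = 1, t([0,1]^3) = 2, and t([0,1]^4) = 3. -/
/-!
`D` is affine in each coordinate of each point, so its absolute value is maximised over the cube
at a configuration of vertices. There the determinant is an integer, and the affine map
`x ↦ 2x - 1` onto `[-1, 1]ᵐ` multiplies `D` by `2ᵐ` while turning the matrix into a `±1` matrix,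
so Hadamard's inequality gives `(2ᵐ D)² ≤ (m + 1)^(m + 1)`. For `m = 1, 2, 3, 4` this forces
`D ≤ 1, 1, 2, 3`, and explicit vertex configurations attain these values.
-/

open Matrix Finset Function

theorem Real.prod_le_arith_mean_pow {ι : Type*} (s : Finset ι) (z : ι → ℝ)
    (hz : ∀ i ∈ s, 0 ≤ z i) : ∏ i ∈ s, z i ≤ ((∑ i ∈ s, z i) / #s) ^ #s := by
  rcases s.eq_empty_or_nonempty with rfl | hs
  · simp
  have hcard : (#s : ℝ) ≠ 0 := by positivity
  have hAMGM : ∏ i ∈ s, z i ^ (#s : ℝ)⁻¹ ≤ (∑ i ∈ s, z i) / #s := by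
    simpa [Finset.mul_sum, div_eq_inv_mul] using
      Real.geom_mean_le_arith_mean_weighted s (fun _ => (#s : ℝ)⁻¹) z
        (fun _ _ => by positivity) (by simp [hcard]) hz
  calc ∏ i ∈ s, z i = (∏ i ∈ s, z i ^ (#s : ℝ)⁻¹) ^ #s := by
        rw [Real.finsetProd_rpow s z hz, ← Real.rpow_natCast,
          ← Real.rpow_mul (prod_nonneg hz), inv_mul_cancel₀ hcard, Real.rpow_one]
    _ ≤ ((∑ i ∈ s, z i) / #s) ^ #s :=
        pow_le_pow_left₀ (prod_nonneg fun i hi => Real.rpow_nonneg (hz i hi) _) hAMGM _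

theorem Matrix.PosSemidef.det_le_trace_div_card_pow {n : Type*} [Fintype n] [DecidableEq n]
    {G : Matrix n n ℝ} (hG : G.PosSemidef) :
    G.det ≤ (G.trace / Fintype.card n) ^ Fintype.card n := by
  have hdet := hG.isHermitian.det_eq_prod_eigenvalues
  have htr := hG.isHermitian.trace_eq_sum_eigenvalues
  simp only [RCLike.ofReal_real_eq_id, id] at hdet htr
  rw [hdet, htr, ← Finset.card_univ]
  exact Real.prod_le_arith_mean_pow _ _ fun i _ => hG.eigenvalues_nonneg i

theorem Matrix.det_sq_le_card_pow_of_abs_le_one {n : Type*} [Fintype n] [DecidableEq n]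
    (A : Matrix n n ℝ) (hA : ∀ i j, |A i j| ≤ 1) :
    A.det ^ 2 ≤ (Fintype.card n : ℝ) ^ Fintype.card n := by
  have hG : (A * Aᵀ).PosSemidef := by
    simpa using posSemidef_self_mul_conjTranspose A
  have htr : (A * Aᵀ).trace ≤ Fintype.card n * Fintype.card n := by
    have hdiag : ∀ i, (A * Aᵀ) i i ≤ Fintype.card n := fun i => by
      simpa [mul_apply, ← sq] using Finset.sum_le_card_nsmul univ (fun j => A i j ^ 2) 1
        fun j _ => by simpa [sq_le_one_iff_abs_le_one] using hA i j
    simpa [trace] using Finset.sum_le_sum fun i (_ : i ∈ univ) => hdiag i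
  calc A.det ^ 2 = (A * Aᵀ).det := by rw [det_mul, det_transpose, sq]
    _ ≤ ((A * Aᵀ).trace / Fintype.card n) ^ Fintype.card n := hG.det_le_trace_div_card_pow
    _ ≤ (Fintype.card n * Fintype.card n / Fintype.card n) ^ Fintype.card n := by
        gcongr
        exact div_nonneg hG.trace_nonneg (Nat.cast_nonneg _)
    _ = (Fintype.card n : ℝ) ^ Fintype.card n := by rw [mul_self_div_self]

theorem Matrix.exists_det_eq_intCast {n : Type*} [Fintype n] [DecidableEq n]
    (A : Matrix n n ℝ) (hA : ∀ i j, ∃ z : ℤ, A i j = z) : ∃ z : ℤ, A.det = z := by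
  choose Z hZ using hA
  refine ⟨(of Z).det, ?_⟩
  rw [show ((of Z).det : ℝ) = Int.castRingHom ℝ (of Z).det from rfl, RingHom.map_det]
  congr 1
  ext i j
  simp [hZ]

theorem Matrix.det_updateRow_update {n R : Type*} [Fintype n] [DecidableEq n] [CommRing R]
    (A : Matrix n n R) (i j : n) (t : R) :
    (A.updateRow i (update (A i) j t)).det
      = (1 - t) * (A.updateRow i (update (A i) j 0)).det
        + t * (A.updateRow i (update (A i) j 1)).det := by
  have hrow : update (A i) j t = (1 - t) • update (A i) j 0 + t • update (A i) j 1 := by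
    ext k
    rcases eq_or_ne k j with rfl | hk
    · simp
    · simp only [Pi.add_apply, Pi.smul_apply, update_of_ne hk, smul_eq_mul]
      ring
  rw [hrow, det_updateRow_add, det_updateRow_smul, det_updateRow_smul]

theorem abs_one_sub_mul_add_mul_le_max {a b t : ℝ} (ht : t ∈ Set.Icc (0 : ℝ) 1) :
    |(1 - t) * a + t * b| ≤ max |a| |b| :=
  calc |(1 - t) * a + t * b| ≤ (1 - t) * |a| + t * |b| := by
        simpa [abs_mul, abs_of_nonneg ht.1, abs_of_nonneg (sub_nonneg.2 ht.2)]
          using abs_add_le ((1 - t) * a) (t * b)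
    _ ≤ (1 - t) * max |a| |b| + t * max |a| |b| := by
        gcongr
        · linarith [ht.2]
        · exact le_max_left _ _
        · linarith [ht.1]
        · exact le_max_right _ _
    _ = max |a| |b| := by ring

theorem exists_vertex_le_of_le_max_update {ι : Type*} [Fintype ι] [DecidableEq ι]
    (g : (ι → ℝ) → ℝ) (hg : ∀ x i t, t ∈ Set.Icc (0 : ℝ) 1 →
      g (update x i t) ≤ max (g (update x i 0)) (g (update x i 1)))
    {x : ι → ℝ} (hx : ∀ i, x i ∈ Set.Icc (0 : ℝ) 1) :
    ∃ y : ι → ℝ, (∀ i, y i = 0 ∨ y i = 1) ∧ g x ≤ g y := by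
  suffices H : ∀ s : Finset ι, ∀ x : ι → ℝ, (∀ i, x i ∈ Set.Icc (0 : ℝ) 1) →
      (∀ i ∉ s, x i = 0 ∨ x i = 1) → ∃ y : ι → ℝ, (∀ i, y i = 0 ∨ y i = 1) ∧ g x ≤ g y from
    H univ x hx (by simp)
  intro s
  induction s using Finset.induction_on with
  | empty => exact fun x _ hx => ⟨x, fun i => hx i (by simp), le_rfl⟩
  | insert a s _ ih =>
    intro x hx hxs
    have hvert : ∀ b : ℝ, (b = 0 ∨ b = 1) → ∃ y : ι → ℝ, (∀ i, y i = 0 ∨ y i = 1) ∧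
        g (update x a b) ≤ g y := fun b hb => by
      refine ih _ (fun i => ?_) (fun i hi => ?_)
      · rcases eq_or_ne i a with rfl | hia
        · rcases hb with rfl | rfl <;> simp
        · simpa [update_of_ne hia] using hx i
      · rcases eq_or_ne i a with rfl | hia
        · simpa using hb
        · simpa [update_of_ne hia] using hxs i (by simp [hia, hi])
    obtain ⟨y₀, hy₀, h₀⟩ := hvert 0 (Or.inl rfl)
    obtain ⟨y₁, hy₁, h₁⟩ := hvert 1 (Or.inr rfl)
    have hx_le : g x ≤ max (g y₀) (g y₁) := by
      simpa using (hg x a (x a) (hx a)).trans (max_le_max h₀ h₁)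
    rcases le_max_iff.1 hx_le with h | h
    exacts [⟨y₀, hy₀, h⟩, ⟨y₁, hy₁, h⟩]

def letendreMatrix (m : ℕ) (v : Fin (m + 1) → Fin m → ℝ) :
    Matrix (Fin (m + 1)) (Fin (m + 1)) ℝ :=
  Matrix.of (Fin.cons (fun _ => 1) (fun i j => v j i))

section Letendre

variable {m : ℕ}

@[simp] theorem letendreMatrix_zero (v : Fin (m + 1) → Fin m → ℝ) (j : Fin (m + 1)) :
    letendreMatrix m v 0 j = 1 := rfl

@[simp] theorem letendreMatrix_succ (v : Fin (m + 1) → Fin m → ℝ) (i : Fin m) (j : Fin (m + 1)) :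
    letendreMatrix m v i.succ j = v j i := rfl

theorem letendreD_eq_abs_det (v : Fin (m + 1) → Fin m → ℝ) :
    letendreD m v = |(letendreMatrix m v).det| := rfl

theorem letendreD_eq_abs_det_of_vecCons (v : Fin (m + 1) → Fin m → ℝ) :
    letendreD m v = |(Matrix.of fun j => vecCons 1 (v j)).det| := by
  rw [letendreD_eq_abs_det, ← det_transpose]
  congr 2
  ext j i
  cases i using Fin.cases <;> rfl

theorem letendreD_smul_add (v : Fin (m + 1) → Fin m → ℝ) (c : ℝ) (w : Fin m → ℝ) :
    letendreD m (fun j => c • v j + w) = |c| ^ m * letendreD m v := by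
  have hrow : (letendreMatrix m fun j => c • v j + w).det
      = (Matrix.of fun i j => (Fin.cons 1 fun _ => c : Fin (m + 1) → ℝ) i
          * letendreMatrix m v i j).det := by
    refine det_eq_of_forall_row_eq_smul_add_const (Fin.cons 0 w) 0 rfl fun i j => ?_
    cases i using Fin.cases <;> simp [mul_comm]
  rw [letendreD_eq_abs_det, letendreD_eq_abs_det, hrow, det_mul_column, Fin.prod_cons]
  simp [abs_mul]

theorem letendreD_sq_le_of_abs_le_one {v : Fin (m + 1) → Fin m → ℝ} (hv : ∀ j i, |v j i| ≤ 1) :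
    letendreD m v ^ 2 ≤ ((m + 1 : ℕ) : ℝ) ^ (m + 1) := by
  have hentries : ∀ i j, |letendreMatrix m v i j| ≤ 1 := fun i j => by
    cases i using Fin.cases <;> simp [hv]
  simpa [letendreD_eq_abs_det] using det_sq_le_card_pow_of_abs_le_one _ hentries

theorem exists_letendreD_eq_natCast {v : Fin (m + 1) → Fin m → ℝ}
    (hv : ∀ j i, ∃ z : ℤ, v j i = z) : ∃ k : ℕ, letendreD m v = k := by
  obtain ⟨z, hz⟩ := (letendreMatrix m v).exists_det_eq_intCast fun i j => by
    cases i using Fin.cases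
    · exact ⟨1, by simp⟩
    · exact hv _ _
  exact ⟨z.natAbs, by rw [letendreD_eq_abs_det, hz, Nat.cast_natAbs, Int.cast_abs]⟩

/-- Rescaling the cube to `[-1, 1]ᵐ` multiplies `D` by `2ᵐ` and brings Hadamard's bound into
play. -/
theorem exists_letendreD_eq_natCast_and_sq_le {v : Fin (m + 1) → Fin m → ℝ}
    (hv : ∀ j i, v j i = 0 ∨ v j i = 1) :
    ∃ k : ℕ, letendreD m v = k ∧ (2 ^ m * k) ^ 2 ≤ (m + 1) ^ (m + 1) := by
  obtain ⟨k, hk⟩ := exists_letendreD_eq_natCast (v := v) fun j i => by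
    rcases hv j i with h | h
    exacts [⟨0, by simp [h]⟩, ⟨1, by simp [h]⟩]
  refine ⟨k, hk, ?_⟩
  have hpm : ∀ j i, |(fun j => (2 : ℝ) • v j + fun _ : Fin m => (-1 : ℝ)) j i| ≤ 1 :=
    fun j i => by rcases hv j i with h | h <;> norm_num [h]
  have hD := letendreD_sq_le_of_abs_le_one hpm
  rw [letendreD_smul_add, hk, abs_two] at hD
  exact_mod_cast hD

theorem letendreMatrix_curry_update (x : Fin (m + 1) × Fin m → ℝ) (j : Fin (m + 1))
    (i : Fin m) (t : ℝ) :
    letendreMatrix m (curry (update x (j, i) t))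
      = (letendreMatrix m (curry x)).updateRow i.succ
          (update (letendreMatrix m (curry x) i.succ) j t) := by
  ext a b
  cases a using Fin.cases with
  | zero => simp [updateRow_ne (Fin.succ_ne_zero i).symm]
  | succ a =>
    rcases eq_or_ne a i with rfl | hai
    · rcases eq_or_ne b j with rfl | hbj
      · simp
      · simp [update_of_ne hbj, update_of_ne (by simp [hbj] : (b, a) ≠ (j, a)), curry]
    · simp [updateRow_ne (Fin.succ_injective _ |>.ne hai),
        update_of_ne (by simp [hai] : (b, a) ≠ (j, i)), curry]

theorem exists_vertex_letendreD_le {v : Fin (m + 1) → Fin m → ℝ} (hv : ∀ j, v j ∈ Set.Icc 0 1) :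
    ∃ w : Fin (m + 1) → Fin m → ℝ,
      (∀ j i, w j i = 0 ∨ w j i = 1) ∧ letendreD m v ≤ letendreD m w := by
  obtain ⟨y, hy, hle⟩ := exists_vertex_le_of_le_max_update (fun x => letendreD m (curry x))
    (fun x ⟨j, i⟩ t ht => by
      simp only [letendreD_eq_abs_det, letendreMatrix_curry_update]
      rw [det_updateRow_update]
      exact abs_one_sub_mul_add_mul_le_max ht)
    (x := uncurry v) fun p => ⟨(hv p.1).1 p.2, (hv p.1).2 p.2⟩
  exact ⟨curry y, fun j i => hy (j, i), hle⟩

theorem letendreD_le_of_lt {c : ℕ} (hc : (m + 1) ^ (m + 1) < (2 ^ m * (c + 1)) ^ 2)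
    {v : Fin (m + 1) → Fin m → ℝ} (hv : ∀ j, v j ∈ Set.Icc 0 1) : letendreD m v ≤ c := by
  obtain ⟨w, hw, hvw⟩ := exists_vertex_letendreD_le hv
  obtain ⟨k, hk, hk_sq⟩ := exists_letendreD_eq_natCast_and_sq_le hw
  have hkc : k < c + 1 :=
    Nat.lt_of_mul_lt_mul_left (lt_of_pow_lt_pow_left₀ 2 (Nat.zero_le _) (hk_sq.trans_lt hc))
  calc letendreD m v ≤ letendreD m w := hvw
    _ = k := hk
    _ ≤ c := by exact_mod_cast Nat.lt_succ_iff.1 hkc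

theorem letendreT_unitCube_eq {c : ℕ} (hc : (m + 1) ^ (m + 1) < (2 ^ m * (c + 1)) ^ 2)
    (v : Fin (m + 1) → Fin m → ℝ) (hv : ∀ j i, v j i = 0 ∨ v j i = 1) (hvc : letendreD m v = c) :
    letendreT m (Set.Icc 0 1) = c := by
  have hv_Icc : ∀ j i, v j i ∈ Set.Icc (0 : ℝ) 1 := fun j i => by
    rcases hv j i with h | h <;> simp [h]
  exact IsGreatest.csSup_eq
    ⟨⟨v, fun j => ⟨fun i => (hv_Icc j i).1, fun i => (hv_Icc j i).2⟩, hvc.symm⟩,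
      by rintro _ ⟨w, hw, rfl⟩; exact letendreD_le_of_lt hc hw⟩

end Letendre

theorem t_unit_cube_small_dims :
    letendreT 1 (Set.Icc 0 1) = 1 ∧ letendreT 2 (Set.Icc 0 1) = 1 ∧
    letendreT 3 (Set.Icc 0 1) = 2 ∧ letendreT 4 (Set.Icc 0 1) = 3 := by
  refine ⟨?_, ?_, ?_, ?_⟩
  · exact_mod_cast letendreT_unitCube_eq (c := 1) (by norm_num) ![![0], ![1]]
      (by simp [Fin.forall_fin_succ]) (by simp [letendreD_eq_abs_det_of_vecCons, det_fin_two])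
  · exact_mod_cast letendreT_unitCube_eq (c := 1) (by norm_num) ![![0, 0], ![1, 0], ![0, 1]]
      (by simp [Fin.forall_fin_succ]) (by simp [letendreD_eq_abs_det_of_vecCons, det_fin_three])
  · exact_mod_cast letendreT_unitCube_eq (c := 2) (by norm_num)
      ![![0, 0, 0], ![1, 1, 0], ![1, 0, 1], ![0, 1, 1]] (by simp [Fin.forall_fin_succ])
      (by simp [letendreD_eq_abs_det_of_vecCons, det_succ_row_zero, Fin.sum_univ_succ,
            Fin.succAbove]
          norm_num)
  · exact_mod_cast letendreT_unitCube_eq (c := 3) (by norm_num)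
      ![![0, 0, 0, 0], ![0, 0, 1, 1], ![0, 1, 0, 1], ![1, 0, 0, 1], ![1, 1, 1, 0]]
      (by simp [Fin.forall_fin_succ])
      (by simp [letendreD_eq_abs_det_of_vecCons, det_succ_row_zero, Fin.sum_univ_succ,
            Fin.succAbove]
          norm_num)
end

section
/- Let d ≥ 3 and let P(x) := x(x−1)⋯(x−d+1) be the falling factorial polynomial of degree d. Let x_1, …, x_n be nonnegative real numbers with x_1 + ⋯ + x_n = X and X ≥ d·n. Then P(x_1) + ⋯ + P(x_n) ≥ n · P(X/n). -/
/-!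
For `m ≥ d` the tangent line of `P` at `m` lies below `P` on `[0, ∞)`; summing this over the
`x j`, whose mean is `m = X / n`, gives the claim. For `t ≥ d - 1` the tangent inequality is the
Weierstrass product inequality `∏ (1 + a i) ≥ 1 + ∑ a i` for the numbers
`a i = (t - m) / (m - i) ≥ -1`, which all have the sign of `t - m`. For `0 ≤ t < d - 1` the
tangent line is at most `-P(m) / 2 ≤ -d! / 2 ≤ -(d - 1)!` at `t`, while `|P| ≤ (d - 1)!` on
`[0, d - 1]`.
-/

open Finset Polynomial
open scoped Nat

theorem one_add_sum_le_prod_one_add {ι R : Type*} [CommRing R] [LinearOrder R]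
    [IsStrictOrderedRing R] (s : Finset ι) (a : ι → R) (h_ge : ∀ i ∈ s, -1 ≤ a i)
    (h_sign : ∀ i ∈ s, ∀ k ∈ s, 0 ≤ a i * a k) :
    1 + ∑ i ∈ s, a i ≤ ∏ i ∈ s, (1 + a i) := by
  classical
  induction s using Finset.cons_induction with
  | empty => simp
  | cons i s his ih =>
    rw [sum_cons, prod_cons]
    have hi : 0 ≤ 1 + a i := by linarith [h_ge i (mem_cons_self i s)]
    have hcross : 0 ≤ a i * ∑ k ∈ s, a k := by
      rw [mul_sum]
      exact sum_nonneg fun k hk ↦ h_sign i (mem_cons_self i s) k (mem_cons_of_mem hk)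
    have ih' := ih (fun k hk ↦ h_ge k (mem_cons_of_mem hk))
      (fun k hk l hl ↦ h_sign k (mem_cons_of_mem hk) l (mem_cons_of_mem hl))
    calc 1 + (a i + ∑ k ∈ s, a k) ≤ (1 + a i) * (1 + ∑ k ∈ s, a k) := by nlinarith
      _ ≤ (1 + a i) * ∏ k ∈ s, (1 + a k) := mul_le_mul_of_nonneg_left ih' hi

section OrderedRing

variable {S : Type*} [CommRing S] [LinearOrder S] [IsStrictOrderedRing S]

theorem factorial_le_descPochhammer_eval {n : ℕ} {s : S} (h : (n : S) ≤ s) :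
    (n ! : S) ≤ (descPochhammer S n).eval s := by
  have hn : (n : S) ∈ Set.Ici ((n : S) - 1) := by simp
  have hmono : (descPochhammer S n).eval (n : S) ≤ (descPochhammer S n).eval s :=
    monotoneOn_descPochhammer_eval n hn (hn.trans h) h
  rwa [descPochhammer_eval_eq_descFactorial, Nat.descFactorial_self] at hmono

theorem abs_descPochhammer_eval_le_factorial (n : ℕ) {t : S} (h0 : 0 ≤ t) (ht : t ≤ n + 1) :
    |(descPochhammer S (n + 2)).eval t| ≤ (n + 1)! := by
  induction n generalizing t with
  | zero =>
    rw [descPochhammer_succ_eval, descPochhammer_one, eval_X, abs_le]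
    norm_num at ht ⊢
    constructor <;> nlinarith
  | succ n ih =>
    push_cast at ht
    rw [Nat.factorial_succ, Nat.cast_mul]
    rcases le_total t (n + 1) with htn | htn
    · rw [descPochhammer_succ_eval, abs_mul, mul_comm]
      have hlast : |t - ↑(n + 2)| ≤ ↑(n + 1 + 1) := by
        rw [abs_le]; push_cast; constructor <;> linarith
      exact mul_le_mul hlast (ih h0 htn) (abs_nonneg _) (by positivity)
    · rw [descPochhammer_succ_left, eval_mul, eval_comp, abs_mul]
      simp only [eval_X, eval_sub, eval_one]
      have hfirst : |t| ≤ ↑(n + 1 + 1) := by rw [abs_of_nonneg h0]; push_cast; linarith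
      have h1 : 0 ≤ t - 1 := by linarith [(Nat.cast_nonneg n : (0 : S) ≤ n)]
      exact mul_le_mul hfirst (ih h1 (by linarith)) (abs_nonneg _) (by positivity)

end OrderedRing

section Field

variable {K : Type*} [Field K] [LinearOrder K] [IsStrictOrderedRing K]

/- The slope `P(m) * ∑ i ∈ range d, (m - i)⁻¹` in the tangent lemmas below is `P'(m)`, by
logarithmic differentiation of `P(m) = ∏ i ∈ range d, (m - i)`. -/

theorem descPochhammer_tangent_le_of_sub_one_le {d : ℕ} {m t : K} (hm : (d : K) - 1 < m)
    (ht : (d : K) - 1 ≤ t) :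
    (descPochhammer K d).eval m + (descPochhammer K d).eval m * (∑ i ∈ range d, (m - i)⁻¹) *
      (t - m) ≤ (descPochhammer K d).eval t := by
  have hle : ∀ i ∈ range d, (i : K) ≤ d - 1 := fun i hi ↦
    le_sub_iff_add_le.mpr (by exact_mod_cast mem_range.mp hi)
  have hpos : ∀ i ∈ range d, 0 < m - i := fun i hi ↦ by linarith [hle i hi]
  set a : ℕ → K := fun i ↦ (m - i)⁻¹ * (t - m) with ha
  have h_ge : ∀ i ∈ range d, -1 ≤ a i := fun i hi ↦ by
    rw [ha, le_inv_mul_iff₀ (hpos i hi)]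
    linarith [hle i hi]
  have h_sign : ∀ i ∈ range d, ∀ k ∈ range d, 0 ≤ a i * a k := fun i hi k hk ↦ by
    have := hpos i hi
    have := hpos k hk
    rw [show a i * a k = (m - i)⁻¹ * (m - k)⁻¹ * (t - m) ^ 2 by ring]
    positivity
  have hfactor : ∀ i ∈ range d, (m - i) * (1 + a i) = t - i := fun i hi ↦ by
    have := (hpos i hi).ne'
    simp only [ha]
    field_simp
    ring
  calc _ = (descPochhammer K d).eval m * (1 + ∑ i ∈ range d, a i) := by
        rw [ha, ← sum_mul]
        ring
    _ ≤ (descPochhammer K d).eval m * ∏ i ∈ range d, (1 + a i) :=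
        mul_le_mul_of_nonneg_left (one_add_sum_le_prod_one_add _ a h_ge h_sign)
          (descPochhammer_nonneg hm.le)
    _ = (descPochhammer K d).eval t := by
        rw [descPochhammer_eval_eq_prod_range, descPochhammer_eval_eq_prod_range,
          ← prod_mul_distrib]
        exact prod_congr rfl hfactor

theorem descPochhammer_tangent_le_of_lt_sub_one {d : ℕ} {m t : K} (hm : (d : K) ≤ m)
    (h0 : 0 ≤ t) (ht : t < d - 1) :
    (descPochhammer K d).eval m + (descPochhammer K d).eval m * (∑ i ∈ range d, (m - i)⁻¹) *
      (t - m) ≤ (descPochhammer K d).eval t := by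
  have hd : 1 < d := by exact_mod_cast (show (1 : K) < d by linarith)
  obtain ⟨n, rfl⟩ : ∃ n, d = n + 2 := ⟨d - 2, by omega⟩
  push_cast at hm ht
  have hPm : ((n + 2)! : K) ≤ (descPochhammer K (n + 2)).eval m :=
    factorial_le_descPochhammer_eval (by exact_mod_cast hm)
  have hPt : -((n + 1)! : K) ≤ (descPochhammer K (n + 2)).eval t :=
    (abs_le.mp (abs_descPochhammer_eval_le_factorial n h0 (by linarith))).1
  have hslope : 3 / 2 ≤ (∑ i ∈ range (n + 2), (m - i)⁻¹) * (m - t) := by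
    rw [sum_range_succ, sum_range_succ, add_mul, add_mul]
    push_cast
    have hlast : 1 ≤ (m - (n + 1))⁻¹ * (m - t) := by
      rw [le_inv_mul_iff₀ (by linarith)]; linarith
    have hnext : 1 / 2 ≤ (m - n)⁻¹ * (m - t) := by
      rw [le_inv_mul_iff₀ (by linarith)]; linarith
    have hrest : 0 ≤ (∑ i ∈ range n, (m - i)⁻¹) * (m - t) := by
      refine mul_nonneg (sum_nonneg fun i hi ↦ inv_nonneg.mpr ?_) (by linarith)
      have : (i : K) ≤ n := by exact_mod_cast (mem_range.mp hi).le
      linarith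
    linarith
  set P := (descPochhammer K (n + 2)).eval m
  have hfact : (0 : K) ≤ (n + 1)! := by positivity
  have hPm_half : ((n + 1)! : K) ≤ P / 2 := by
    rw [Nat.factorial_succ, Nat.cast_mul] at hPm
    push_cast at hPm
    nlinarith
  calc P + P * (∑ i ∈ range (n + 2), (m - i)⁻¹) * (t - m)
        = P * (1 - (∑ i ∈ range (n + 2), (m - i)⁻¹) * (m - t)) := by ring
    _ ≤ P * (-(1 / 2)) := mul_le_mul_of_nonneg_left (by linarith) (by linarith)
    _ ≤ _ := by linarith

theorem descPochhammer_tangent_le {d : ℕ} {m t : K} (hm : (d : K) ≤ m) (ht : 0 ≤ t) :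
    (descPochhammer K d).eval m + (descPochhammer K d).eval m * (∑ i ∈ range d, (m - i)⁻¹) *
      (t - m) ≤ (descPochhammer K d).eval t := by
  rcases lt_or_ge t (d - 1) with h | h
  · exact descPochhammer_tangent_le_of_lt_sub_one hm ht h
  · exact descPochhammer_tangent_le_of_sub_one_le (by linarith) h

theorem card_mul_le_sum_of_tangent {ι : Type*} [Fintype ι] (f : K → K) (x : ι → K) {m c : K}
    (hmean : ∑ j, x j = Fintype.card ι * m) (htan : ∀ j, f m + c * (x j - m) ≤ f (x j)) :
    Fintype.card ι * f m ≤ ∑ j, f (x j) :=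
  calc Fintype.card ι * f m = ∑ j, (f m + c * (x j - m)) := by
        simp only [sum_add_distrib, ← mul_sum, sum_sub_distrib, hmean, sum_const, card_univ,
          nsmul_eq_mul]
        ring
    _ ≤ ∑ j, f (x j) := sum_le_sum fun j _ ↦ htan j

end Field

theorem falling_factorial_superadditive_general (d : ℕ)
    (n : ℕ) (x : Fin n → ℝ) (X : ℝ)
    (hx : ∀ i, 0 ≤ x i) (hsum : ∑ i, x i = X) (hX : (d : ℝ) * n ≤ X) :
    (n : ℝ) * ∏ i ∈ Finset.range d, (X / n - i) ≤
      ∑ j, ∏ i ∈ Finset.range d, (x j - i) := by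
  rcases eq_or_ne n 0 with rfl | hn
  · simp
  have hn' : (0 : ℝ) < n := by positivity
  have hmean : ∑ j, x j = Fintype.card (Fin n) * (X / n) := by
    rw [hsum, Fintype.card_fin]
    field_simp
  have hm : (d : ℝ) ≤ X / n := by rwa [le_div_iff₀ hn']
  simp only [← descPochhammer_eval_eq_prod_range]
  simpa only [Fintype.card_fin] using
    card_mul_le_sum_of_tangent (fun t ↦ (descPochhammer ℝ d).eval t) x hmean
      fun j ↦ descPochhammer_tangent_le hm (hx j)

theorem falling_factorial_superadditive (d : ℕ) (hd : 3 ≤ d)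
    (n : ℕ) (x : Fin n → ℝ) (X : ℝ)
    (hx : ∀ i, 0 ≤ x i) (hsum : ∑ i, x i = X) (hX : (d : ℝ) * n ≤ X) :
    (n : ℝ) * ∏ i ∈ Finset.range d, (X / n - i) ≤
      ∑ j, ∏ i ∈ Finset.range d, (x j - i) :=
  falling_factorial_superadditive_general d n x X hx hsum hX
end

section
/- For the polynomial P(x) = x(x−1)⋯(x−d+1) with d ≥ 3, we have max_{x ∈ [0, d−1]} |P'(x)| ≤ d!, and P'(x) < P'(d) for all x ∈ [0, d), and P' is strictly increasing on [d, ∞). -/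
open Finset
open scoped Nat

/-! With `P' x = ∑ k, ∏ i ≠ k, (x - i)`, it suffices to bound each summand on `[0, d - 1]` by
`(d - 1)!`. Replacing every factor `|x - i|` by `max 1 |x - i|` makes the omitted factor harmless,
and then induction on the number of nodes works: for `x ∈ [0, n + 1]` one of the end nodes `0` or
`n + 1` lies at distance at most `n + 1` from `x`, and the remaining `n + 1` nodes still contain `x`
in their hull. At `x = d` the summand `k = d - 1` equals `P d = d!` while the others are positive;
beyond `d - 1` all factors are nonnegative and increasing in `x`. -/

theorem deriv_prod_sub {𝕜 ι : Type*} [NontriviallyNormedField 𝕜] [DecidableEq ι]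
    (s : Finset ι) (a : ι → 𝕜) (x : 𝕜) :
    deriv (fun y => ∏ i ∈ s, (y - a i)) x = ∑ k ∈ s, ∏ i ∈ s.erase k, (x - a i) := by
  simpa using
    (HasDerivAt.fun_finsetProd fun i (_ : i ∈ s) => (hasDerivAt_id x).sub_const (a i)).deriv

theorem prod_range_natCast_sub (n : ℕ) : ∏ i ∈ range n, ((n : ℝ) - i) = n ! := by
  rw [← descPochhammer_eval_eq_prod_range, descPochhammer_eval_eq_descFactorial,
    Nat.descFactorial_self]

theorem prod_range_max_one_abs_sub_le_factorial {n : ℕ} {x : ℝ} (hx0 : 0 ≤ x) (hxn : x ≤ n) :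
    ∏ i ∈ range (n + 1), max 1 |x - i| ≤ n ! := by
  induction n generalizing x with
  | zero => simp [show x = 0 by simp at hxn; linarith]
  | succ n ih =>
    rw [Nat.factorial_succ, Nat.cast_mul]
    push_cast at hxn ⊢
    have hmax : ∀ i : ℕ, i ≤ n + 1 → max 1 |x - i| ≤ n + 1 := fun i hi => by
      have : (i : ℝ) ≤ n + 1 := by exact_mod_cast hi
      exact max_le (by linarith [n.cast_nonneg (α := ℝ)]) (abs_le.2 ⟨by linarith, by linarith⟩)
    rcases le_or_gt x n with hx | hx
    · rw [prod_range_succ, mul_comm]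
      gcongr
      · exact hmax _ le_rfl
      · exact ih hx0 hx
    rcases le_or_gt 1 x with hx1 | hx1
    · rw [prod_range_succ', mul_comm]
      gcongr
      · exact hmax 0 (Nat.zero_le _)
      · calc ∏ i ∈ range (n + 1), max 1 |x - ↑(i + 1)|
            = ∏ i ∈ range (n + 1), max 1 |(x - 1) - i| := by push_cast; ring_nf
          _ ≤ n ! := ih (by linarith) (by linarith)
    -- here `n < x < 1`, the one case where neither end node can be split off
    · obtain rfl : n = 0 := by exact_mod_cast Nat.lt_one_iff.1 (by exact_mod_cast hx.trans hx1)
      have h0 : |x| ≤ 1 := abs_le.2 ⟨by linarith, by linarith⟩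
      have h1 : |x - 1| ≤ 1 := abs_le.2 ⟨by linarith, by linarith⟩
      simp [prod_range_succ, h0, h1]

theorem abs_prod_erase_range_sub_le_factorial (n k : ℕ) {x : ℝ} (hx0 : 0 ≤ x) (hxn : x ≤ n) :
    |∏ i ∈ (range (n + 1)).erase k, (x - i)| ≤ n ! := by
  rw [abs_prod]
  calc ∏ i ∈ (range (n + 1)).erase k, |x - i|
      ≤ ∏ i ∈ (range (n + 1)).erase k, max 1 |x - i| :=
        prod_le_prod (fun _ _ => abs_nonneg _) fun _ _ => le_max_right _ _
    _ ≤ ∏ i ∈ range (n + 1), max 1 |x - i| :=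
        prod_le_prod_of_subset_of_one_le (erase_subset _ _)
          (fun _ _ => zero_le_one.trans (le_max_left _ _)) fun _ _ _ => le_max_left _ _
    _ ≤ n ! := prod_range_max_one_abs_sub_le_factorial hx0 hxn

theorem abs_deriv_prod_range_sub_le_factorial {d : ℕ} {x : ℝ} (hx0 : 0 ≤ x) (hxd : x ≤ d - 1) :
    |deriv (fun y : ℝ => ∏ i ∈ range d, (y - i)) x| ≤ d ! := by
  obtain ⟨n, rfl⟩ : ∃ n, d = n + 1 :=
    Nat.exists_eq_add_one.2 (by exact_mod_cast (by linarith : (0 : ℝ) < d))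
  push_cast at hxd
  rw [deriv_prod_sub]
  calc |∑ k ∈ range (n + 1), ∏ i ∈ (range (n + 1)).erase k, (x - i)|
      ≤ ∑ k ∈ range (n + 1), |∏ i ∈ (range (n + 1)).erase k, (x - i)| := abs_sum_le_sum_abs _ _
    _ ≤ ∑ k ∈ range (n + 1), (n ! : ℝ) :=
        sum_le_sum fun k _ => abs_prod_erase_range_sub_le_factorial n k hx0 (by linarith)
    _ = (n + 1)! := by simp [Nat.factorial_succ]

theorem factorial_lt_deriv_prod_range_sub {d : ℕ} (hd : 2 ≤ d) :
    (d ! : ℝ) < deriv (fun y : ℝ => ∏ i ∈ range d, (y - i)) d := by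
  have hlast : d - 1 ∈ range d := mem_range.2 (by omega)
  have hterm : ∏ i ∈ (range d).erase (d - 1), ((d : ℝ) - i) = d ! := by
    rw [← prod_range_natCast_sub, ← mul_prod_erase _ _ hlast, Nat.cast_pred (by omega),
      sub_sub_cancel, one_mul]
  rw [deriv_prod_sub, ← add_sum_erase _ _ hlast, hterm, lt_add_iff_pos_right]
  refine sum_pos (fun k _ => prod_pos fun i hi => sub_pos.2 ?_) ⟨0, by simp; omega⟩
  exact_mod_cast mem_range.1 (mem_of_mem_erase hi)

theorem strictMonoOn_deriv_prod_range_sub {d : ℕ} (hd : 2 ≤ d) :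
    StrictMonoOn (deriv (fun y : ℝ => ∏ i ∈ range d, (y - i))) (Set.Ici ((d : ℝ) - 1)) := by
  intro x hx y _ hxy
  rw [Set.mem_Ici] at hx
  have hle : ∀ i ∈ range d, (i : ℝ) ≤ x := fun i hi => by
    have : (i : ℝ) + 1 ≤ d := by exact_mod_cast mem_range.1 hi
    linarith
  have hlt : ∀ i ∈ (range d).erase (d - 1), (i : ℝ) < x := fun i hi => by
    obtain ⟨hi, hid⟩ := mem_erase.1 hi
    have : (i : ℝ) + 2 ≤ d := by exact_mod_cast (by grind : i + 2 ≤ d)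
    linarith
  simp only [deriv_prod_sub]
  refine sum_lt_sum
    (fun k _ => prod_le_prod (fun i hi => sub_nonneg.2 (hle i (mem_of_mem_erase hi)))
      fun i _ => by linarith) ⟨d - 1, mem_range.2 (by omega), ?_⟩
  exact prod_lt_prod_of_nonempty (fun i hi => sub_pos.2 (hlt i hi)) (fun i _ => by linarith)
    ⟨0, by simp; omega⟩

theorem falling_factorial_deriv_bounds (d : ℕ) (hd : 3 ≤ d) :
    (∀ x ∈ Set.Icc (0 : ℝ) ((d : ℝ) - 1),
        |deriv (fun y : ℝ => ∏ i ∈ Finset.range d, (y - i)) x| ≤ (d.factorial : ℝ)) ∧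
    (∀ x ∈ Set.Ico (0 : ℝ) (d : ℝ),
        deriv (fun y : ℝ => ∏ i ∈ Finset.range d, (y - i)) x <
          deriv (fun y : ℝ => ∏ i ∈ Finset.range d, (y - i)) (d : ℝ)) ∧
    StrictMonoOn (deriv (fun y : ℝ => ∏ i ∈ Finset.range d, (y - i))) (Set.Ici (d : ℝ)) := by
  have hbound : ∀ x ∈ Set.Icc (0 : ℝ) ((d : ℝ) - 1),
      |deriv (fun y : ℝ => ∏ i ∈ Finset.range d, (y - i)) x| ≤ (d.factorial : ℝ) :=
    fun x hx => abs_deriv_prod_range_sub_le_factorial hx.1 hx.2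
  have hmono := strictMonoOn_deriv_prod_range_sub (by omega : 2 ≤ d)
  refine ⟨hbound, fun x hx => ?_, hmono.mono (Set.Ici_subset_Ici.2 (by linarith))⟩
  rcases le_or_gt x (d - 1) with h | h
  · exact ((le_abs_self _).trans (hbound x ⟨hx.1, h⟩)).trans_lt
      (factorial_lt_deriv_prod_range_sub (by omega))
  · exact hmono h.le (by simp) hx.2
end

section
/- Let Ω ⊂ ℂ be a bounded set with positive diameter d(Ω) := sup_{α_1,α_2 ∈ Ω} |α_2 − α_1|. Let S = {x_1, …, x_S} be a finite set of Gaussian integers contained in Ω, and let Q be a finite set of pairwise coprime Gaussian integers such that for each q ∈ Q, the elements of S lie in at most ν(q) of the N(q) residue classes of ℤ[i]/(q), where N denotes the norm. If ∑_{q ∈ Q} (log N(q))/ν(q) − 2 log d(Ω) > 0, then #S ≤ (∑_{q ∈ Q} log N(q) − 2 log d(Ω)) / (∑_{q ∈ Q} (log N(q))/ν(q) − 2 log d(Ω)). -/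
/-!
Put `Δ = ∏_{x ≠ y ∈ S} (x - y) ≠ 0` and let `t_q` be the number of ordered pairs `x ≠ y` in `S`
with `q ∣ x - y`. By Cauchy–Schwarz over the at most `ν(q)` residue classes met by `S`,
`#S² ≤ ν(q) (t_q + #S)`. As the `q ∈ Q` are pairwise coprime, `∏ q ^ t_q ∣ Δ`, so taking norms
`∑ t_q log N(q) ≤ log N(Δ) ≤ (#S² - #S) · 2 log d(Ω)`, each factor of `Δ` having norm at most
`d(Ω)²`. Eliminating the `t_q` between these two bounds gives the inequality.
-/

open GaussianInt

open Finset

section Collisions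

variable {α β : Type*} [DecidableEq β]

lemma card_filter_product_eq_card_filter_offDiag_add [DecidableEq α] (s : Finset α)
    (f : α → β) :
    #{p ∈ s ×ˢ s | f p.1 = f p.2} = #{p ∈ s.offDiag | f p.1 = f p.2} + #s := by
  rw [← diag_union_offDiag, filter_union,
    card_union_of_disjoint (disjoint_filter_filter (disjoint_diag_offDiag s)),
    filter_true_of_mem fun p hp => congrArg f (mem_diag.1 hp).2, diag_card, add_comm]

lemma sq_card_le_card_image_mul_card_filter_product (s : Finset α) (f : α → β) :
    #s ^ 2 ≤ #(s.image f) * #{p ∈ s ×ˢ s | f p.1 = f p.2} := by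
  have hfibers : #{p ∈ s ×ˢ s | f p.1 = f p.2} = ∑ c ∈ s.image f, #{x ∈ s | f x = c} ^ 2 := by
    rw [card_eq_sum_card_fiberwise (f := fun p => f p.1) (t := s.image f)
      fun p hp => mem_image_of_mem f (mem_product.1 (mem_filter.1 hp).1).1]
    refine sum_congr rfl fun c _ => ?_
    rw [sq, ← card_product]
    congr 1
    ext p
    simp only [mem_filter, mem_product]
    constructor
    · rintro ⟨⟨⟨h1, h2⟩, he⟩, hc⟩
      exact ⟨⟨h1, hc⟩, h2, he ▸ hc⟩
    · rintro ⟨⟨h1, hc1⟩, h2, hc2⟩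
      exact ⟨⟨⟨h1, h2⟩, hc1.trans hc2.symm⟩, hc1⟩
  calc #s ^ 2 = (∑ c ∈ s.image f, #{x ∈ s | f x = c}) ^ 2 := by rw [← card_eq_sum_card_image]
    _ ≤ #(s.image f) * ∑ c ∈ s.image f, #{x ∈ s | f x = c} ^ 2 := sq_sum_le_card_mul_sum_sq
    _ = #(s.image f) * #{p ∈ s ×ˢ s | f p.1 = f p.2} := by rw [hfibers]

lemma sq_card_le_card_image_mul_card_filter_offDiag_add [DecidableEq α] (s : Finset α)
    (f : α → β) :
    #s ^ 2 ≤ #(s.image f) * (#{p ∈ s.offDiag | f p.1 = f p.2} + #s) :=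
  card_filter_product_eq_card_filter_offDiag_add s f ▸
    sq_card_le_card_image_mul_card_filter_product s f

end Collisions

lemma Finset.prod_pow_card_filter_dvd_prod {ι R : Type*} [CommSemiring R]
    [DecidableRel (α := R) (· ∣ ·)] {Q : Finset R} (hQ : (Q : Set R).Pairwise IsCoprime)
    (s : Finset ι) (g : ι → R) :
    ∏ q ∈ Q, q ^ #{i ∈ s | q ∣ g i} ∣ ∏ i ∈ s, g i := by
  refine prod_dvd_of_coprime (fun a ha b hb hab => (hQ ha hb hab).pow) fun q _ => ?_
  calc q ^ #{i ∈ s | q ∣ g i} = ∏ i ∈ s with q ∣ g i, q := (prod_const q).symm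
    _ ∣ ∏ i ∈ s with q ∣ g i, g i := prod_dvd_prod_of_dvd _ _ fun i hi => (mem_filter.1 hi).2
    _ ∣ ∏ i ∈ s, g i := prod_dvd_prod_of_subset _ _ _ (filter_subset _ _)

lemma Real.log_intCast_le_log_intCast_of_dvd {a b : ℤ} (hb : b ≠ 0) (h : a ∣ b) :
    Real.log a ≤ Real.log b := by
  have ha : a ≠ 0 := ne_zero_of_dvd_ne_zero hb h
  rw [← Real.log_abs, ← Real.log_abs (b : ℝ), ← Int.cast_abs, ← Int.cast_abs]
  exact Real.log_le_log (by positivity)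
    (by exact_mod_cast Int.le_of_dvd (abs_pos.2 hb) ((abs_dvd_abs _ _).2 h))

lemma Real.sum_mul_log_intCast_le_of_prod_pow_dvd {ι : Type*} {Q : Finset ι} {n : ι → ℤ}
    {t : ι → ℕ} {m : ℤ} (hm : m ≠ 0) (h : ∏ q ∈ Q, n q ^ t q ∣ m) :
    ∑ q ∈ Q, t q * Real.log (n q) ≤ Real.log m := by
  have hn : ∀ q ∈ Q, (n q : ℝ) ^ t q ≠ 0 := fun q hq => by
    exact_mod_cast prod_ne_zero_iff.1 (ne_zero_of_dvd_ne_zero hm h) q hq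
  calc ∑ q ∈ Q, t q * Real.log (n q) = Real.log (∏ q ∈ Q, (n q : ℝ) ^ t q) := by
        simp_rw [Real.log_prod hn, Real.log_pow]
    _ ≤ Real.log m := by exact_mod_cast Real.log_intCast_le_log_intCast_of_dvd hm h

lemma GaussianInt.norm_sub_le_sq_diam {Ω : Set ℂ} (hΩ : Bornology.IsBounded Ω)
    {x y : GaussianInt} (hx : (x : ℂ) ∈ Ω) (hy : (y : ℂ) ∈ Ω) :
    ((x - y).norm : ℝ) ≤ Metric.diam Ω ^ 2 := by
  rw [intCast_real_norm, toComplex_sub, Complex.normSq_eq_norm_sq, ← Complex.dist_eq]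
  gcongr
  exact Metric.dist_le_diam_of_mem hΩ hx hy

lemma GaussianInt.sum_card_dvd_mul_log_norm_le [DecidableRel (α := GaussianInt) (· ∣ ·)]
    {Q : Finset GaussianInt} (hQ : (Q : Set GaussianInt).Pairwise IsCoprime)
    {s : Finset (GaussianInt × GaussianInt)} (hs : ∀ p ∈ s, p.1 ≠ p.2) {B : ℝ}
    (hB : ∀ p ∈ s, ((p.1 - p.2).norm : ℝ) ≤ B) :
    ∑ q ∈ Q, #{p ∈ s | q ∣ p.1 - p.2} * Real.log q.norm ≤ #s * Real.log B := by
  set Δ := ∏ p ∈ s, (p.1 - p.2)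
  have hΔ : Δ ≠ 0 := prod_ne_zero_iff.2 fun p hp => sub_ne_zero.2 (hs p hp)
  have hnorm : Δ.norm = ∏ p ∈ s, (p.1 - p.2).norm := map_prod Zsqrtd.normMonoidHom _ s
  have hdvd : ∏ q ∈ Q, q.norm ^ #{p ∈ s | q ∣ p.1 - p.2} ∣ Δ.norm := by
    have h := map_dvd Zsqrtd.normMonoidHom (prod_pow_card_filter_dvd_prod hQ s fun p => p.1 - p.2)
    simp only [map_prod, map_pow] at h
    rw [hnorm]
    exact h
  calc _ ≤ Real.log Δ.norm :=
        Real.sum_mul_log_intCast_le_of_prod_pow_dvd (norm_eq_zero.not.2 hΔ) hdvd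
    _ ≤ Real.log (B ^ #s) := by
        refine Real.log_le_log (by exact_mod_cast norm_pos.2 hΔ) ?_
        rw [hnorm, Int.cast_prod, ← prod_const]
        exact prod_le_prod (fun p _ => by exact_mod_cast norm_nonneg _) hB
    _ = #s * Real.log B := Real.log_pow _ _

/-- The larger sieve inequality, with `t q` the number of collisions modulo `q`. -/
lemma larger_sieve_inequality {ι : Type*} {Q : Finset ι} {a : ι → ℝ} {ν t : ι → ℕ} {k : ℕ}
    {c : ℝ} (ha : ∀ q ∈ Q, 0 ≤ a q) (hden : 0 < ∑ q ∈ Q, a q / ν q - c)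
    (hcount : ∀ q ∈ Q, k ^ 2 ≤ ν q * (t q + k))
    (hsum : ∑ q ∈ Q, t q * a q ≤ ((k : ℝ) ^ 2 - k) * c) :
    (k : ℝ) ≤ (∑ q ∈ Q, a q - c) / (∑ q ∈ Q, a q / ν q - c) := by
  rw [le_div_iff₀ hden]
  rcases Nat.eq_zero_or_pos k with rfl | hk
  · have : ∑ q ∈ Q, a q / ν q ≤ ∑ q ∈ Q, a q := sum_le_sum fun q hq => by
      rcases Nat.eq_zero_or_pos (ν q) with h | h
      · simpa [h] using ha q hq
      · exact div_le_self (ha q hq) (by exact_mod_cast h)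
    linarith
  have hlow : ∀ q ∈ Q, ((k : ℝ) ^ 2 / ν q - k) * a q ≤ t q * a q := fun q hq => by
    have hν : 0 < ν q := Nat.pos_of_ne_zero fun h => by
      have := hcount q hq
      rw [h, zero_mul, Nat.le_zero, pow_eq_zero_iff two_ne_zero] at this
      omega
    refine mul_le_mul_of_nonneg_right ?_ (ha q hq)
    rw [sub_le_iff_le_add, div_le_iff₀ (by exact_mod_cast hν)]
    exact_mod_cast (hcount q hq).trans_eq (mul_comm _ _)
  suffices (k : ℝ) * (k * ∑ q ∈ Q, a q / ν q - ∑ q ∈ Q, a q) ≤ k * ((k - 1) * c) by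
    linarith [le_of_mul_le_mul_left this (by exact_mod_cast hk)]
  calc (k : ℝ) * (k * ∑ q ∈ Q, a q / ν q - ∑ q ∈ Q, a q)
      = ∑ q ∈ Q, ((k : ℝ) ^ 2 / ν q - k) * a q := by
        rw [mul_sub, ← mul_assoc, mul_sum, mul_sum, ← sum_sub_distrib]
        exact sum_congr rfl fun q _ => by ring
    _ ≤ ∑ q ∈ Q, t q * a q := sum_le_sum hlow
    _ ≤ ((k : ℝ) ^ 2 - k) * c := hsum
    _ = k * ((k - 1) * c) := by ring

theorem larger_sieve_gaussian_general
    (Ω : Set ℂ) (hbd : Bornology.IsBounded Ω)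
    (S : Finset GaussianInt) (hSΩ : ∀ x ∈ S, GaussianInt.toComplex x ∈ Ω)
    (Q : Finset GaussianInt) (hcop : (Q : Set GaussianInt).Pairwise IsCoprime)
    (ν : GaussianInt → ℕ)
    (hclass : ∀ q ∈ Q,
      Set.ncard ((fun x => Ideal.Quotient.mk (Ideal.span {q}) x) '' (S : Set GaussianInt)) ≤ ν q)
    (hden : 0 < ∑ q ∈ Q, Real.log (Zsqrtd.norm q : ℝ) / ν q - 2 * Real.log (Metric.diam Ω)) :
    (S.card : ℝ) ≤
      (∑ q ∈ Q, Real.log (Zsqrtd.norm q : ℝ) - 2 * Real.log (Metric.diam Ω)) /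
        (∑ q ∈ Q, Real.log (Zsqrtd.norm q : ℝ) / ν q - 2 * Real.log (Metric.diam Ω)) := by
  classical
  refine larger_sieve_inequality (t := fun q => #{p ∈ S.offDiag | q ∣ p.1 - p.2})
    (fun q _ => Real.log_intCast_nonneg _) hden (fun q hq => ?_) ?_
  · have hcoll := sq_card_le_card_image_mul_card_filter_offDiag_add S
      (Ideal.Quotient.mk (Ideal.span {q}))
    simp only [Ideal.Quotient.eq, Ideal.mem_span_singleton] at hcoll
    have hνq := hclass q hq
    rw [← coe_image, Set.ncard_coe_finset] at hνq
    exact hcoll.trans (Nat.mul_le_mul_right _ hνq)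
  · calc _ ≤ #S.offDiag * Real.log (Metric.diam Ω ^ 2) :=
          sum_card_dvd_mul_log_norm_le hcop (fun p hp => (mem_offDiag.1 hp).2.2) fun p hp =>
            norm_sub_le_sq_diam hbd (hSΩ _ (mem_offDiag.1 hp).1) (hSΩ _ (mem_offDiag.1 hp).2.1)
      _ = _ := by
        rw [offDiag_card, Real.log_pow, Nat.cast_sub (Nat.le_mul_self _)]
        push_cast
        ring

theorem larger_sieve_gaussian
    (Ω : Set ℂ) (hbd : Bornology.IsBounded Ω) (hdiam : 0 < Metric.diam Ω)
    (S : Finset GaussianInt) (hSΩ : ∀ x ∈ S, GaussianInt.toComplex x ∈ Ω)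
    (Q : Finset GaussianInt) (hcop : (Q : Set GaussianInt).Pairwise IsCoprime)
    (ν : GaussianInt → ℕ)
    (hclass : ∀ q ∈ Q,
      Set.ncard ((fun x => Ideal.Quotient.mk (Ideal.span {q}) x) '' (S : Set GaussianInt)) ≤ ν q)
    (hden : 0 < ∑ q ∈ Q, Real.log (Zsqrtd.norm q : ℝ) / ν q - 2 * Real.log (Metric.diam Ω)) :
    (S.card : ℝ) ≤
      (∑ q ∈ Q, Real.log (Zsqrtd.norm q : ℝ) - 2 * Real.log (Metric.diam Ω)) /
        (∑ q ∈ Q, Real.log (Zsqrtd.norm q : ℝ) / ν q - 2 * Real.log (Metric.diam Ω)) :=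
  larger_sieve_gaussian_general Ω hbd S hSΩ Q hcop ν hclass hden
end

section
/- Let S be a finite set of integers in an interval of length M > 0, and let Q be a finite set of pairwise coprime integers q ≥ 2 such that the elements of S lie in at most ν(q) residue classes modulo q for each q ∈ Q (1 ≤ ν(q) ≤ q). For each q ∈ Q, partitioning S into classes of sizes S_1, …, S_{ν(q)}, one has ∑_{r=1}^{ν(q)} C(S_r, 2) ≥ S²/(2ν(q)) − S/2 where S = #S; consequently ∏_{q ∈ Q} q^{S²/(2ν(q)) − S/2} ≤ M^{C(S,2)} whenever S ≥ 2. -/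
/-!
Let `Δ = ∏_{i<j} (x_j - x_i)` over the elements `x_1 < ⋯ < x_n` of `S`. Each of its `C(n, 2)`
factors lies in `(0, M]`, so `Δ ≤ M^C(n,2)`. Each pair congruent modulo `q` contributes a factor
divisible by `q`, so `q^e_q ∣ Δ` where `e_q = ∑_r C(S_r, 2)`; by coprimality `∏_q q^e_q ∣ Δ`,
hence `∏_q q^e_q ≤ Δ`. Cauchy–Schwarz on the class sizes `S_r`, of which there are at most
`ν(q)`, gives `e_q ≥ n²/(2ν(q)) - n/2`.
-/

open Finset

lemma sq_div_sub_le_sum_choose_two {ι : Type*} (I : Finset ι) (k : ι → ℕ) {ν : ℕ}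
    (hI : #I ≤ ν) :
    ((∑ i ∈ I, k i : ℕ) : ℝ) ^ 2 / (2 * ν) - (∑ i ∈ I, k i : ℕ) / 2 ≤
      ∑ i ∈ I, ((k i).choose 2 : ℝ) := by
  push_cast
  set n := ∑ i ∈ I, (k i : ℝ)
  have hsq : n ^ 2 / ν ≤ ∑ i ∈ I, (k i : ℝ) ^ 2 := by
    refine div_le_of_le_mul₀ ν.cast_nonneg (sum_nonneg fun i _ => sq_nonneg _) ?_
    calc n ^ 2 ≤ #I * ∑ i ∈ I, (k i : ℝ) ^ 2 := sq_sum_le_card_mul_sum_sq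
      _ ≤ ν * ∑ i ∈ I, (k i : ℝ) ^ 2 := by gcongr
      _ = (∑ i ∈ I, (k i : ℝ) ^ 2) * ν := mul_comm _ _
  have hchoose : ∑ i ∈ I, ((k i).choose 2 : ℝ) = (∑ i ∈ I, (k i : ℝ) ^ 2 - n) / 2 := by
    simp only [Nat.cast_choose_two, n, ← sum_sub_distrib, sum_div]
    exact sum_congr rfl fun i _ => by ring
  rw [hchoose, mul_comm, ← div_div]
  linarith

lemma sq_div_sub_le_sum_choose_two_card_fiber {α β : Type*} [DecidableEq β] (s : Finset α)
    (f : α → β) {ν : ℕ} (hf : #(s.image f) ≤ ν) :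
    (#s : ℝ) ^ 2 / (2 * ν) - #s / 2 ≤
      ∑ r ∈ s.image f, ((#{x ∈ s | f x = r}).choose 2 : ℝ) := by
  simpa only [← card_eq_sum_card_image] using
    sq_div_sub_le_sum_choose_two (s.image f) (fun r => #{x ∈ s | f x = r}) hf

lemma prod_pairs_fiber_dvd_prod_pairs {α β M : Type*} [LT α] [DecidableLT α] [DecidableEq β]
    [CommMonoid M] (s : Finset α) (f : α → β) (g : α × α → M) :
    ∏ r ∈ s.image f, ∏ p ∈ {x ∈ s | f x = r} ×ˢ {x ∈ s | f x = r} with p.1 < p.2, g p ∣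
      ∏ p ∈ s ×ˢ s with p.1 < p.2, g p := by
  classical
  rw [← prod_biUnion]
  · refine prod_dvd_prod_of_subset _ _ _ fun p hp => ?_
    simp only [mem_biUnion, mem_filter, mem_product] at hp ⊢
    tauto
  · intro r _ r' _ hrr'
    refine disjoint_left.mpr fun p hp hp' => hrr' ?_
    simp only [mem_filter, mem_product] at hp hp'
    exact hp.1.1.2.symm.trans hp'.1.1.2

def pairDiffProd (S : Finset ℤ) : ℤ := ∏ p ∈ S ×ˢ S with p.1 < p.2, (p.2 - p.1)

def residuePairCount (S : Finset ℤ) (q : ℤ) : ℕ :=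
  ∑ r ∈ S.image (· % q), (#{x ∈ S | x % q = r}).choose 2

lemma pow_residuePairCount_dvd_pairDiffProd (S : Finset ℤ) (q : ℤ) :
    q ^ residuePairCount S q ∣ pairDiffProd S := by
  refine dvd_trans ?_ (prod_pairs_fiber_dvd_prod_pairs S (· % q) fun p => p.2 - p.1)
  rw [residuePairCount, ← prod_pow_eq_pow_sum]
  refine prod_dvd_prod_of_dvd _ _ fun r _ => ?_
  rw [← card_product_filter_lt, ← prod_const]
  refine prod_dvd_prod_of_dvd _ _ fun p hp => ?_
  simp only [mem_filter, mem_product] at hp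
  exact Int.ModEq.dvd (hp.1.1.2.trans hp.1.2.2.symm)

lemma pairDiffProd_pos (S : Finset ℤ) : 0 < pairDiffProd S :=
  prod_pos fun _ hp => sub_pos.mpr (mem_filter.mp hp).2

lemma pairDiffProd_le {S : Finset ℤ} {N M : ℝ} (hS : ∀ x ∈ S, N ≤ (x : ℝ) ∧ (x : ℝ) ≤ N + M) :
    (pairDiffProd S : ℝ) ≤ M ^ (#S).choose 2 := by
  rw [pairDiffProd, ← card_product_filter_lt, ← prod_const]
  have hfactor : ∀ p ∈ {p ∈ S ×ˢ S | p.1 < p.2}, 0 ≤ (p.2 : ℝ) - p.1 ∧ (p.2 : ℝ) - p.1 ≤ M := by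
    intro p hp
    simp only [mem_filter, mem_product] at hp
    have := hS p.1 hp.1.1
    have := hS p.2 hp.1.2
    have : (p.1 : ℝ) < p.2 := by exact_mod_cast hp.2
    constructor <;> linarith
  push_cast
  exact prod_le_prod (fun p hp => (hfactor p hp).1) fun p hp => (hfactor p hp).2

lemma prod_pow_residuePairCount_le_pairDiffProd (S Q : Finset ℤ)
    (hcop : (Q : Set ℤ).Pairwise IsCoprime) :
    ∏ q ∈ Q, q ^ residuePairCount S q ≤ pairDiffProd S :=
  Int.le_of_dvd (pairDiffProd_pos S) <|
    prod_dvd_of_coprime (fun _ ha _ hb hab => (hcop ha hb hab).pow)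
      fun q _ => pow_residuePairCount_dvd_pairDiffProd S q

theorem larger_sieve_core_inequality_general
    (S : Finset ℤ) (Q : Finset ℤ) (ν : ℤ → ℕ) (N M : ℝ)
    (hS : ∀ x ∈ S, N ≤ (x : ℝ) ∧ (x : ℝ) ≤ N + M)
    (hQ2 : ∀ q ∈ Q, 2 ≤ q)
    (hcop : (Q : Set ℤ).Pairwise IsCoprime)
    (hclass : ∀ q ∈ Q, (S.image (fun x => x % q)).card ≤ ν q) :
    (∀ q ∈ Q,
      (S.card : ℝ) ^ 2 / (2 * ν q) - S.card / 2 ≤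
        ∑ r ∈ S.image (fun x => x % q), (((S.filter (fun x => x % q = r)).card.choose 2 : ℝ))) ∧
    (2 ≤ S.card →
      ∏ q ∈ Q, (q : ℝ) ^ ((S.card : ℝ) ^ 2 / (2 * ν q) - S.card / 2) ≤
        M ^ (S.card.choose 2)) := by
  have hpairs := fun q (hq : q ∈ Q) =>
    sq_div_sub_le_sum_choose_two_card_fiber S (· % q) (hclass q hq)
  refine ⟨hpairs, fun _ => ?_⟩
  have hq1 : ∀ q ∈ Q, (1 : ℝ) ≤ q := fun q hq => by exact_mod_cast (hQ2 q hq).trans' one_le_two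
  calc ∏ q ∈ Q, (q : ℝ) ^ ((S.card : ℝ) ^ 2 / (2 * ν q) - S.card / 2)
      ≤ ∏ q ∈ Q, (q : ℝ) ^ residuePairCount S q := by
        refine prod_le_prod (fun q hq => Real.rpow_nonneg (zero_le_one.trans (hq1 q hq)) _)
          fun q hq => ?_
        rw [← Real.rpow_natCast (q : ℝ) (residuePairCount S q)]
        refine Real.rpow_le_rpow_of_exponent_le (hq1 q hq) ((hpairs q hq).trans_eq ?_)
        simp [residuePairCount]
    _ ≤ pairDiffProd S := by exact_mod_cast prod_pow_residuePairCount_le_pairDiffProd S Q hcop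
    _ ≤ M ^ (S.card.choose 2) := pairDiffProd_le hS

theorem larger_sieve_core_inequality
    (S : Finset ℤ) (Q : Finset ℤ) (ν : ℤ → ℕ) (N M : ℝ) (hM : 0 < M)
    (hS : ∀ x ∈ S, N ≤ (x : ℝ) ∧ (x : ℝ) ≤ N + M)
    (hQ2 : ∀ q ∈ Q, 2 ≤ q)
    (hcop : (Q : Set ℤ).Pairwise IsCoprime)
    (hν : ∀ q ∈ Q, 1 ≤ ν q ∧ (ν q : ℤ) ≤ q)
    (hclass : ∀ q ∈ Q, (S.image (fun x => x % q)).card ≤ ν q) :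
    (∀ q ∈ Q,
      (S.card : ℝ) ^ 2 / (2 * ν q) - S.card / 2 ≤
        ∑ r ∈ S.image (fun x => x % q), (((S.filter (fun x => x % q = r)).card.choose 2 : ℝ))) ∧
    (2 ≤ S.card →
      ∏ q ∈ Q, (q : ℝ) ^ ((S.card : ℝ) ^ 2 / (2 * ν q) - S.card / 2) ≤
        M ^ (S.card.choose 2)) :=
  larger_sieve_core_inequality_general S Q ν N M hS hQ2 hcop hclass
end
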